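/- arXiv:0805.0149 — 5 statements merged into one kernel-verified Lean document; each statement's English description precedes it below -/
import Mathlib

section
/- Let F be a real n×p matrix and let k ≥ 1 be an even integer with 2.5k ≤ p satisfying δ_{1.5k} + θ_{k,1.5k} < 1. Let β ∈ ℝ^p be a k-sparse vector and y = Fβ + z where ‖Fᵀz‖_∞ ≤ λ for some λ ≥ 0. If β̂ is a minimizer of ‖γ‖₁ over all γ ∈ ℝ^p with ‖Fᵀ(y − Fγ)‖_∞ ≤ λ, then ‖β̂ − β‖₂ ≤ C₁ √k λ, where C₁ = 2√3 / (1 − δ_{1.5k} − θ_{k,1.5k}). -/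
/-- A vector `v ∈ ℝ^p` is `k`-sparse if it has at most `k` nonzero entries. -/
def IsSparse {p : ℕ} (k : ℕ) (v : Fin p → ℝ) : Prop :=
  ∃ s : Finset (Fin p), s.card ≤ k ∧ ∀ i ∉ s, v i = 0

/-- The ℓ₂ norm of a vector in `ℝ^m`. -/
noncomputable def l2norm {m : ℕ} (v : Fin m → ℝ) : ℝ :=
  Real.sqrt (∑ i, v i ^ 2)

/-- The ℓ₁ norm of a vector in `ℝ^m`. -/
def l1norm {m : ℕ} (v : Fin m → ℝ) : ℝ := ∑ i, |v i|

/-- The `k`-restricted isometry constant `δ_k` of `F`: the smallest `δ` such that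
`√(1-δ)‖c‖₂ ≤ ‖Fc‖₂ ≤ √(1+δ)‖c‖₂` for every `k`-sparse vector `c`. -/
noncomputable def ripConst {n p : ℕ} (F : Matrix (Fin n) (Fin p) ℝ) (k : ℕ) : ℝ :=
  sInf {δ : ℝ | ∀ c : Fin p → ℝ, IsSparse k c →
    Real.sqrt (1 - δ) * l2norm c ≤ l2norm (F.mulVec c) ∧
    l2norm (F.mulVec c) ≤ Real.sqrt (1 + δ) * l2norm c}

/-- The `(k,k')`-restricted orthogonality constant `θ_{k,k'}` of `F`: the smallest `θ` such
that `|⟨Fc, Fc'⟩| ≤ θ‖c‖₂‖c'‖₂` for all `k`-sparse `c` and `k'`-sparse `c'` with disjoint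
supports. -/
noncomputable def roConst {n p : ℕ} (F : Matrix (Fin n) (Fin p) ℝ) (k k' : ℕ) : ℝ :=
  sInf {θ : ℝ | ∀ c c' : Fin p → ℝ, IsSparse k c → IsSparse k' c' →
    (∀ i, c i = 0 ∨ c' i = 0) →
    |∑ i, F.mulVec c i * F.mulVec c' i| ≤ θ * (l2norm c * l2norm c')}


/-!
Write `h = β̂ - β` and let `T₀ ⊇ supp β` with `|T₀| ≤ k = 2m`. Feasibility of `β` gives
`‖β̂‖₁ ≤ ‖β‖₁`, which puts `h` in the cone `‖h_{T₀ᶜ}‖₁ ≤ ‖h_{T₀}‖₁`, and the two residual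
constraints give `‖FᵀF h‖_∞ ≤ 2λ`. Let `T` be `T₀` together with the `k/2` largest entries of `h`
off `T₀`, and cut the remaining entries, in decreasing order, into blocks of size `k`. The shifting
inequality bounds the sum of the `ℓ₂` norms of the blocks by `‖h_{T₀ᶜ}‖₁ / √k ≤ ‖h_T‖₂`. Expanding
`⟨F h_T, F h⟩` over the blocks, the restricted isometry and orthogonality constants give
`(1 - δ - θ) ‖h_T‖₂² ≤ ⟨F h_T, F h⟩ = ⟨h_T, FᵀF h⟩ ≤ 2λ √(1.5k) ‖h_T‖₂`,
and `‖h‖₂² = ‖h_T‖₂² + ‖h - h_T‖₂² ≤ 2 ‖h_T‖₂²`.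
-/

open Finset Matrix

section L2

variable {m : ℕ}

lemma l2norm_eq_norm (v : Fin m → ℝ) :
    l2norm v = ‖(WithLp.toLp 2 v : EuclideanSpace ℝ (Fin m))‖ := by
  simp [l2norm, EuclideanSpace.norm_eq]

lemma l2norm_nonneg (v : Fin m → ℝ) : 0 ≤ l2norm v := Real.sqrt_nonneg _

lemma l2norm_sq (v : Fin m → ℝ) : l2norm v ^ 2 = ∑ i, v i ^ 2 :=
  Real.sq_sqrt (by positivity)

lemma l2norm_sq_eq_dotProduct (v : Fin m → ℝ) : l2norm v ^ 2 = v ⬝ᵥ v := by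
  rw [l2norm_sq]; simp [dotProduct, sq]

lemma abs_dotProduct_le (v w : Fin m → ℝ) : |v ⬝ᵥ w| ≤ l2norm v * l2norm w := by
  have := abs_real_inner_le_norm (WithLp.toLp 2 w : EuclideanSpace ℝ (Fin m)) (WithLp.toLp 2 v)
  simpa [EuclideanSpace.inner_eq_star_dotProduct, l2norm_eq_norm, mul_comm] using this

lemma l2norm_sum_le {ι : Type*} (s : Finset ι) (u : ι → Fin m → ℝ) :
    l2norm (∑ j ∈ s, u j) ≤ ∑ j ∈ s, l2norm (u j) := by
  simpa [l2norm_eq_norm, WithLp.toLp_sum] using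
    norm_sum_le s fun j => (WithLp.toLp 2 (u j) : EuclideanSpace ℝ (Fin m))

lemma exists_l2norm_mulVec_le {n : ℕ} (F : Matrix (Fin n) (Fin m) ℝ) :
    ∃ K, 0 ≤ K ∧ ∀ c, l2norm (F *ᵥ c) ≤ K * l2norm c := by
  let L := LinearMap.toContinuousLinearMap (Matrix.toEuclideanLin F)
  refine ⟨‖L‖, norm_nonneg _, fun c => ?_⟩
  simpa [l2norm_eq_norm, L] using L.le_opNorm (WithLp.toLp 2 c)

lemma l2norm_single (i : Fin m) : l2norm (Pi.single i 1) = 1 := by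
  simp [l2norm, Pi.single_apply]

lemma l2norm_indicator_sq (s : Finset (Fin m)) (v : Fin m → ℝ) :
    l2norm (Set.indicator ↑s v) ^ 2 = ∑ i ∈ s, v i ^ 2 := by
  simp [l2norm_sq, Set.indicator_apply, Finset.sum_ite_mem]

lemma l2norm_indicator_mono {s t : Finset (Fin m)} (hst : s ⊆ t) (v : Fin m → ℝ) :
    l2norm (Set.indicator ↑s v) ≤ l2norm (Set.indicator ↑t v) := by
  refine (pow_le_pow_iff_left₀ (l2norm_nonneg _) (l2norm_nonneg _) two_ne_zero).1 ?_
  rw [l2norm_indicator_sq, l2norm_indicator_sq]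
  exact sum_le_sum_of_subset_of_nonneg hst fun _ _ _ => sq_nonneg _

lemma l2norm_indicator_sq_add_sq_sub (s : Finset (Fin m)) (v : Fin m → ℝ) :
    l2norm (Set.indicator ↑s v) ^ 2 + l2norm (v - Set.indicator ↑s v) ^ 2 = l2norm v ^ 2 := by
  simp only [l2norm_sq, ← Finset.sum_add_distrib]
  refine Finset.sum_congr rfl fun i _ => ?_
  by_cases hi : i ∈ s <;> simp [hi]

lemma isSparse_indicator {k : ℕ} {s : Finset (Fin m)} (hs : #s ≤ k) (v : Fin m → ℝ) :
    IsSparse k (Set.indicator ↑s v) :=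
  ⟨s, hs, fun _ hi => Set.indicator_of_notMem (by simpa using hi) _⟩

lemma l1norm_le_sqrt_mul_l2norm {k : ℕ} {v : Fin m → ℝ} (hv : IsSparse k v) :
    l1norm v ≤ √k * l2norm v := by
  obtain ⟨s, hs, hvs⟩ := hv
  have hl1 : l1norm v = ∑ i ∈ s, |v i| * 1 := by
    rw [l1norm, ← Finset.sum_subset s.subset_univ fun i _ hi => by simp [hvs i hi]]
    simp
  have hcs := Finset.sum_mul_sq_le_sq_mul_sq s (fun i => |v i|) fun _ => 1
  have hsq : l1norm v ^ 2 ≤ k * l2norm v ^ 2 := by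
    rw [hl1, l2norm_sq]
    calc (∑ i ∈ s, |v i| * 1) ^ 2 ≤ (∑ i ∈ s, v i ^ 2) * #s := by simpa using hcs
      _ ≤ (∑ i, v i ^ 2) * k := by
        gcongr
        exact s.subset_univ
      _ = k * ∑ i, v i ^ 2 := mul_comm _ _
  calc l1norm v ≤ √(k * l2norm v ^ 2) := (le_abs_self _).trans (Real.abs_le_sqrt hsq)
    _ = √k * l2norm v := by rw [Real.sqrt_mul (Nat.cast_nonneg _), Real.sqrt_sq (l2norm_nonneg _)]

end L2

lemma isSparse_single {p k : ℕ} (hk : 1 ≤ k) (i : Fin p) : IsSparse k (Pi.single i 1) :=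
  ⟨{i}, by simpa using hk, fun _ hj => Pi.single_eq_of_ne (by simpa using hj) 1⟩

section RestrictedConstants

variable {n p : ℕ} (F : Matrix (Fin n) (Fin p) ℝ)

lemma sqrt_one_sub_ripConst_mul_le {k : ℕ} (hp : 0 < p) (hk : 1 ≤ k) {c : Fin p → ℝ}
    (hc : IsSparse k c) : √(1 - ripConst F k) * l2norm c ≤ l2norm (F *ᵥ c) := by
  set S := {δ : ℝ | ∀ c : Fin p → ℝ, IsSparse k c →
    √(1 - δ) * l2norm c ≤ l2norm (F *ᵥ c) ∧ l2norm (F *ᵥ c) ≤ √(1 + δ) * l2norm c}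
  have hclosed : IsClosed S := by
    simp only [S, Set.ofPred_forall, Set.ofPred_and]
    refine isClosed_iInter fun c => isClosed_iInter fun _ => .inter ?_ ?_
    · exact isClosed_le (by fun_prop) continuous_const
    · exact isClosed_le continuous_const (by fun_prop)
  obtain ⟨K, -, hK⟩ := exists_l2norm_mulVec_le F
  have hne : S.Nonempty := by
    refine ⟨1 + K ^ 2, fun c _ => ⟨?_, (hK c).trans ?_⟩⟩
    · rw [Real.sqrt_eq_zero'.2 (by nlinarith), zero_mul]
      exact l2norm_nonneg _
    · exact mul_le_mul_of_nonneg_right (Real.le_sqrt_of_sq_le (by linarith)) (l2norm_nonneg _)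
  have hbdd : BddBelow S := by
    set e : Fin p → ℝ := Pi.single ⟨0, hp⟩ 1
    refine ⟨1 - l2norm (F *ᵥ e) ^ 2, fun δ hδ => ?_⟩
    have he := (hδ e (isSparse_single hk _)).1
    rw [l2norm_single, mul_one, Real.sqrt_le_left (l2norm_nonneg _)] at he
    linarith
  exact (hclosed.csInf_mem hne hbdd c hc).1

lemma one_sub_ripConst_mul_sq_le {k : ℕ} (hp : 0 < p) (hk : 1 ≤ k) {c : Fin p → ℝ}
    (hc : IsSparse k c) : (1 - ripConst F k) * l2norm c ^ 2 ≤ l2norm (F *ᵥ c) ^ 2 := by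
  rcases le_or_gt (1 - ripConst F k) 0 with hδ | hδ
  · nlinarith [sq_nonneg (l2norm c), sq_nonneg (l2norm (F *ᵥ c))]
  · calc (1 - ripConst F k) * l2norm c ^ 2 = (√(1 - ripConst F k) * l2norm c) ^ 2 := by
          rw [mul_pow, Real.sq_sqrt hδ.le]
      _ ≤ l2norm (F *ᵥ c) ^ 2 :=
          pow_le_pow_left₀ (mul_nonneg (Real.sqrt_nonneg _) (l2norm_nonneg _))
            (sqrt_one_sub_ripConst_mul_le F hp hk hc) 2

lemma roConst_spec {k k' : ℕ} (hp : 2 ≤ p) (hk : 1 ≤ k) (hk' : 1 ≤ k') :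
    0 ≤ roConst F k k' ∧ ∀ c c' : Fin p → ℝ, IsSparse k c → IsSparse k' c' →
      (∀ i, c i = 0 ∨ c' i = 0) →
      |F *ᵥ c ⬝ᵥ F *ᵥ c'| ≤ roConst F k k' * (l2norm c * l2norm c') := by
  set S := {θ : ℝ | ∀ c c' : Fin p → ℝ, IsSparse k c → IsSparse k' c' →
    (∀ i, c i = 0 ∨ c' i = 0) → |F *ᵥ c ⬝ᵥ F *ᵥ c'| ≤ θ * (l2norm c * l2norm c')}
  have hclosed : IsClosed S := by
    simp only [S, Set.ofPred_forall]
    exact isClosed_iInter fun c => isClosed_iInter fun c' => isClosed_iInter fun _ =>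
      isClosed_iInter fun _ => isClosed_iInter fun _ =>
        isClosed_le continuous_const (by fun_prop)
  obtain ⟨K, hK0, hK⟩ := exists_l2norm_mulVec_le F
  have hne : S.Nonempty := by
    refine ⟨K ^ 2, fun c c' _ _ _ => ?_⟩
    calc |F *ᵥ c ⬝ᵥ F *ᵥ c'| ≤ l2norm (F *ᵥ c) * l2norm (F *ᵥ c') := abs_dotProduct_le _ _
      _ ≤ (K * l2norm c) * (K * l2norm c') :=
          mul_le_mul (hK c) (hK c') (l2norm_nonneg _) (mul_nonneg hK0 (l2norm_nonneg _))
      _ = K ^ 2 * (l2norm c * l2norm c') := by ring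
  have hnonneg : ∀ θ ∈ S, 0 ≤ θ := by
    intro θ hθ
    have h01 : (⟨0, by omega⟩ : Fin p) ≠ ⟨1, by omega⟩ := by simp
    have := hθ (Pi.single ⟨0, by omega⟩ 1) (Pi.single ⟨1, by omega⟩ 1)
      (isSparse_single hk _) (isSparse_single hk' _) fun i => by
        by_cases hi : i = ⟨0, by omega⟩
        · exact .inr (by simp [hi])
        · exact .inl (by simp [hi])
    rw [l2norm_single, l2norm_single, mul_one, mul_one] at this
    exact (abs_nonneg _).trans this
  exact ⟨le_csInf hne hnonneg, hclosed.csInf_mem hne ⟨0, hnonneg⟩⟩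

end RestrictedConstants

section Rearrangement

/-- The shifting inequality of Cai, Wang and Xu. -/
lemma sum_sq_Ico_le_sq_sum_Ico_div {a : ℕ → ℝ} (ha : Antitone a) (ha0 : ∀ t, 0 ≤ a t)
    {m : ℕ} (hm : 0 < m) (s : ℕ) :
    ∑ t ∈ Ico (s + m) (s + 3 * m), a t ^ 2 ≤ (∑ t ∈ Ico s (s + 2 * m), a t) ^ 2 / (2 * m) := by
  set u := a (s + m)
  set A := ∑ t ∈ Ico s (s + m), a t
  set B := ∑ t ∈ Ico (s + m) (s + 2 * m), a t
  set C := ∑ t ∈ Ico (s + 2 * m) (s + 3 * m), a t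
  have hsq : ∑ t ∈ Ico (s + m) (s + 3 * m), a t ^ 2 ≤ u * (B + C) := by
    rw [sum_Ico_consecutive _ (by omega) (by omega), mul_sum]
    exact sum_le_sum fun t ht => by
      rw [sq]; exact mul_le_mul_of_nonneg_right (ha (mem_Ico.1 ht).1) (ha0 t)
  have hCB : C ≤ B := by
    simp only [C, B, sum_Ico_eq_sum_range, show s + 3 * m - (s + 2 * m) = m by omega,
      show s + 2 * m - (s + m) = m by omega]
    exact sum_le_sum fun i _ => ha (by omega)
  have hA : m * u ≤ A := by
    calc (m : ℝ) * u = ∑ _t ∈ Ico s (s + m), u := by simp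
      _ ≤ A := sum_le_sum fun t ht => ha (mem_Ico.1 ht).2.le
  have hu : 0 ≤ u := ha0 _
  have hB : 0 ≤ B := sum_nonneg fun t _ => ha0 t
  rw [← sum_Ico_consecutive _ (by omega : s ≤ s + m) (by omega), le_div_iff₀ (by positivity)]
  calc (∑ t ∈ Ico (s + m) (s + 3 * m), a t ^ 2) * (2 * m) ≤ 4 * (m * u) * B := by
        nlinarith [mul_le_mul_of_nonneg_left hCB hu]
    _ ≤ (m * u + B) ^ 2 := by nlinarith [sq_nonneg (m * u - B)]
    _ ≤ (A + B) ^ 2 := by gcongr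

lemma sum_range_sum_Ico_mul (a : ℕ → ℝ) (L J : ℕ) :
    ∑ j ∈ range J, ∑ t ∈ Ico (L * j) (L * j + L), a t = ∑ t ∈ range (L * J), a t := by
  induction J with
  | zero => simp
  | succ J ih =>
    rw [sum_range_succ, ih, range_eq_Ico, range_eq_Ico,
      sum_Ico_consecutive _ (Nat.zero_le _) (Nat.le_add_right _ _), mul_add_one]

variable {ι : Type*}

lemma exists_antitone_rearrangement (U : Finset ι) (f : ι → ℝ) (hf : ∀ i, 0 ≤ f i) :
    ∃ (r : ι → ℕ) (a : ℕ → ℝ), Set.BijOn r U (Set.Iio #U) ∧ (∀ i ∈ U, a (r i) = f i) ∧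
      Antitone a ∧ (∀ t, 0 ≤ a t) ∧ ∀ t, #U ≤ t → a t = 0 := by
  classical
  set e := U.equivFin
  set σ := Tuple.sort fun t => -f (e.symm t)
  have hσ := Tuple.monotone_sort fun t => -f (e.symm t)
  let a : ℕ → ℝ := fun t => if ht : t < #U then f (e.symm (σ ⟨t, ht⟩)) else 0
  let r : ι → ℕ := fun i => if hi : i ∈ U then σ.symm (e ⟨i, hi⟩) else 0
  refine ⟨r, a, ⟨fun i hi => ?_, fun i hi j hj hij => ?_, fun t ht => ?_⟩, fun i hi => ?_,
    fun s t hst => ?_, fun t => ?_, fun t ht => dif_neg (not_lt.2 ht)⟩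
  · simp [r, mem_coe.1 hi]
  · simpa [r, mem_coe.1 hi, mem_coe.1 hj, Fin.val_inj] using hij
  · refine ⟨e.symm (σ ⟨t, ht⟩), by simp, by simp [r]⟩
  · simp [a, r, hi]
  · by_cases ht : t < #U
    · simpa [a, ht, hst.trans_lt ht] using
        hσ (show (⟨s, hst.trans_lt ht⟩ : Fin #U) ≤ ⟨t, ht⟩ from hst)
    · simp only [a, dif_neg ht]
      split <;> simp [hf]
  · simp only [a]
    split <;> simp [hf]

lemma sum_filter_rank_eq {U : Finset ι} {f : ι → ℝ} {r : ι → ℕ} {a : ℕ → ℝ}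
    (hr : Set.BijOn r U (Set.Iio #U)) (hra : ∀ i ∈ U, a (r i) = f i) (g : ℝ → ℝ)
    (P : ℕ → Prop) [DecidablePred P] :
    ∑ i ∈ U with P (r i), g (f i) = ∑ t ∈ range #U with P t, g (a t) := by
  refine sum_nbij r (fun i hi => ?_) (hr.injOn.mono fun i hi => (mem_filter.1 hi).1)
    (fun t ht => ?_) fun i hi => by rw [hra i (mem_filter.1 hi).1]
  · simp only [mem_filter, mem_range] at hi ⊢
    exact ⟨hr.mapsTo hi.1, hi.2⟩
  · simp only [coe_filter, mem_range, Set.mem_ofPred_eq] at ht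
    obtain ⟨i, hi, rfl⟩ := hr.surjOn ht.1
    exact ⟨i, mem_coe.2 (mem_filter.2 ⟨mem_coe.1 hi, ht.2⟩), rfl⟩

end Rearrangement

section TailBlock

variable {p m : ℕ} {T₀ : Finset (Fin p)} {r : Fin p → ℕ} {i : Fin p}

/-- The block containing `i`, where `r` ranks the coordinates off `T₀` by decreasing `|h|`:
block `0` is `T₀` with the `m` top-ranked coordinates, block `j + 1` holds the ranks in
`[2mj + m, 2mj + 3m)`. -/
def tailBlock (m : ℕ) (T₀ : Finset (Fin p)) (r : Fin p → ℕ) (i : Fin p) : ℕ :=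
  if i ∈ T₀ then 0 else (r i + m) / (2 * m)

lemma tailBlock_le {N : ℕ} (hN : i ∉ T₀ → r i < N) : tailBlock m T₀ r i ≤ N + m := by
  unfold tailBlock
  split
  · exact Nat.zero_le _
  · exact (Nat.div_le_self _ _).trans (by linarith [hN ‹_›])

lemma mem_or_lt_of_tailBlock_eq_zero (hm : 0 < m) (h : tailBlock m T₀ r i = 0) :
    i ∈ T₀ ∨ r i < m := by
  unfold tailBlock at h
  split at h
  · exact .inl ‹_›
  · rw [Nat.div_eq_zero_iff] at h
    exact .inr (by omega)

lemma mem_Ico_of_tailBlock_eq_succ (hm : 0 < m) {j : ℕ} (h : tailBlock m T₀ r i = j + 1) :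
    i ∉ T₀ ∧ r i ∈ Ico (2 * m * j + m) (2 * m * j + 3 * m) := by
  unfold tailBlock at h
  split at h
  · omega
  · have := (Nat.div_eq_iff (by omega)).1 h
    have e : (j + 1) * (2 * m) = 2 * m * j + 2 * m := by ring
    exact ⟨‹_›, mem_Ico.2 (by omega)⟩

end TailBlock

section TailDecomposition

variable {p m : ℕ}

lemma sum_indicator_fiber {ι : Type*} [Fintype ι] (b : ι → ℕ) {J : ℕ} (hb : ∀ i, b i < J)
    (v : ι → ℝ) : ∑ j ∈ range J, Set.indicator ↑({i | b i = j} : Finset ι) v = v := by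
  funext i
  simp [Finset.sum_apply, Set.indicator_apply, hb i]

lemma l2norm_indicator_le_of_rank_mem_Ico (hm : 0 < m) {U : Finset (Fin p)} {h : Fin p → ℝ}
    {r : Fin p → ℕ} {a : ℕ → ℝ} (hr : Set.BijOn r U (Set.Iio #U))
    (hra : ∀ i ∈ U, a (r i) = |h i|) (ha : Antitone a) (ha0 : ∀ t, 0 ≤ a t)
    {B : Finset (Fin p)} (s : ℕ) (hB : B ⊆ {i ∈ U | r i ∈ Ico (s + m) (s + 3 * m)}) :
    l2norm (Set.indicator ↑B h) ≤ (∑ t ∈ Ico s (s + 2 * m), a t) / √(2 * m) := by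
  have hsq : l2norm (Set.indicator ↑B h) ^ 2 ≤ (∑ t ∈ Ico s (s + 2 * m), a t) ^ 2 / (2 * m) :=
    calc l2norm (Set.indicator ↑B h) ^ 2 = ∑ i ∈ B, |h i| ^ 2 := by
          simp [l2norm_indicator_sq]
      _ ≤ ∑ i ∈ U with r i ∈ Ico (s + m) (s + 3 * m), |h i| ^ 2 :=
          sum_le_sum_of_subset_of_nonneg hB fun _ _ _ => sq_nonneg _
      _ = ∑ t ∈ range #U with t ∈ Ico (s + m) (s + 3 * m), a t ^ 2 :=
          sum_filter_rank_eq hr hra (· ^ 2) (· ∈ Ico (s + m) (s + 3 * m))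
      _ ≤ ∑ t ∈ Ico (s + m) (s + 3 * m), a t ^ 2 :=
          sum_le_sum_of_subset_of_nonneg (fun t ht => (mem_filter.1 ht).2) fun _ _ _ =>
            sq_nonneg _
      _ ≤ _ := sum_sq_Ico_le_sq_sum_Ico_div ha ha0 hm s
  have := Real.sqrt_le_sqrt hsq
  rwa [Real.sqrt_sq (l2norm_nonneg _), Real.sqrt_div (sq_nonneg _),
    Real.sqrt_sq (sum_nonneg fun t _ => ha0 t)] at this

theorem exists_tail_decomposition (hm : 0 < m) (h : Fin p → ℝ) (T₀ : Finset (Fin p)) :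
    ∃ (T : Finset (Fin p)) (J : ℕ) (u : ℕ → Fin p → ℝ),
      T₀ ⊆ T ∧ #T ≤ #T₀ + m ∧ (∀ j, IsSparse (2 * m) (u j)) ∧ (∀ j, ∀ i ∈ T, u j i = 0) ∧
      h = Set.indicator ↑T h + ∑ j ∈ range J, u j ∧
      ∑ j ∈ range J, l2norm (u j) ≤ (∑ i ∈ T₀ᶜ, |h i|) / √(2 * m) := by
  obtain ⟨r, a, hr, hra, ha, ha0, ha_zero⟩ :=
    exists_antitone_rearrangement T₀ᶜ (|h ·|) fun _ => abs_nonneg _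
  set N := #T₀ᶜ
  let B : ℕ → Finset (Fin p) := fun j => {i | tailBlock m T₀ r i = j}
  have hcard (P : Finset ℕ) : #{i ∈ T₀ᶜ | r i ∈ P} ≤ #P := by
    have := sum_filter_rank_eq hr hra (fun _ => 1) (· ∈ P)
    simp only [sum_const, nsmul_eq_mul, mul_one, Nat.cast_inj] at this
    exact this.le.trans (card_le_card fun t ht => (mem_filter.1 ht).2)
  have hB0 : B 0 ⊆ T₀ ∪ {i ∈ T₀ᶜ | r i ∈ range m} := fun i hi => by
    rcases mem_or_lt_of_tailBlock_eq_zero hm (mem_filter.1 hi).2 with hiT | hri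
    · exact mem_union_left _ hiT
    · by_cases hiT : i ∈ T₀ <;> simp [hiT, hri]
  have hBsucc (j : ℕ) :
      B (j + 1) ⊆ {i ∈ T₀ᶜ | r i ∈ Ico (2 * m * j + m) (2 * m * j + 3 * m)} := fun i hi => by
    simpa using mem_Ico_of_tailBlock_eq_succ hm (mem_filter.1 hi).2
  have hfiber : ∑ j ∈ range (N + m + 1), Set.indicator ↑(B j) h = h :=
    sum_indicator_fiber _ (fun i => Nat.lt_succ_of_le (tailBlock_le fun hi =>
      hr.mapsTo (mem_coe.2 (mem_compl.2 hi)))) h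
  refine ⟨B 0, N + m, fun j => Set.indicator ↑(B (j + 1)) h, fun i hi => by simp [B, tailBlock, hi],
    ?_, fun j => isSparse_indicator ?_ h, fun j i hi => ?_, ?_, ?_⟩
  · calc #(B 0) ≤ #T₀ + #{i ∈ T₀ᶜ | r i ∈ range m} :=
          (card_le_card hB0).trans (card_union_le _ _)
      _ ≤ #T₀ + m := by simpa using hcard (range m)
  · exact ((card_le_card (hBsucc j)).trans (hcard _)).trans (by simp; omega)
  · exact Set.indicator_of_notMem (by simp_all [B]) _
  · rw [sum_range_succ', add_comm] at hfiber
    exact hfiber.symm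
  · calc ∑ j ∈ range (N + m), l2norm (Set.indicator ↑(B (j + 1)) h)
        ≤ ∑ j ∈ range (N + m), (∑ t ∈ Ico (2 * m * j) (2 * m * j + 2 * m), a t) / √(2 * m) :=
          sum_le_sum fun j _ => l2norm_indicator_le_of_rank_mem_Ico hm hr hra ha ha0 _
            (hBsucc j)
      _ = (∑ t ∈ range (2 * m * (N + m)), a t) / √(2 * m) := by
          rw [← sum_div, sum_range_sum_Ico_mul]
      _ = (∑ t ∈ range N, a t) / √(2 * m) := by
          rw [← sum_subset (range_subset_range.2 (by nlinarith)) fun t _ ht =>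
            ha_zero t (by simpa using ht)]
      _ = (∑ i ∈ T₀ᶜ, |h i|) / √(2 * m) := by
          simpa using congrArg (· / √(2 * m)) (sum_filter_rank_eq hr hra id fun _ => True).symm

end TailDecomposition

section Estimate

variable {n p m : ℕ} (F : Matrix (Fin n) (Fin p) ℝ)

lemma mulVec_dotProduct_mulVec (c h : Fin p → ℝ) : F *ᵥ c ⬝ᵥ F *ᵥ h = c ⬝ᵥ Fᵀ *ᵥ (F *ᵥ h) := by
  rw [mulVec_transpose, dotProduct_comm, dotProduct_mulVec, dotProduct_comm]

lemma dotProduct_le_l1norm_mul {c g : Fin p → ℝ} {ε : ℝ} (hg : ∀ j, |g j| ≤ ε) :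
    c ⬝ᵥ g ≤ l1norm c * ε := by
  rw [l1norm, sum_mul]
  refine sum_le_sum fun j _ => (le_abs_self _).trans ?_
  rw [abs_mul]
  exact mul_le_mul_of_nonneg_left (hg j) (abs_nonneg _)

lemma l2norm_le_sqrt_two_mul_l2norm_indicator {T : Finset (Fin p)} {h : Fin p → ℝ}
    (hrest : l2norm (h - Set.indicator ↑T h) ≤ l2norm (Set.indicator ↑T h)) :
    l2norm h ≤ √2 * l2norm (Set.indicator ↑T h) := by
  refine (pow_le_pow_iff_left₀ (l2norm_nonneg _)
    (mul_nonneg (Real.sqrt_nonneg _) (l2norm_nonneg _)) two_ne_zero).1 ?_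
  rw [← l2norm_indicator_sq_add_sq_sub T h, mul_pow, Real.sq_sqrt zero_le_two]
  nlinarith [l2norm_nonneg (h - Set.indicator ↑T h)]

lemma one_sub_sub_mul_sq_le_dotProduct {δ θ : ℝ} (hθ0 : 0 ≤ θ) {g : Fin p → ℝ} {J : ℕ}
    {u : ℕ → Fin p → ℝ} (hg : (1 - δ) * l2norm g ^ 2 ≤ l2norm (F *ᵥ g) ^ 2)
    (hcross : ∀ j, |F *ᵥ u j ⬝ᵥ F *ᵥ g| ≤ θ * (l2norm (u j) * l2norm g))
    (hu : ∑ j ∈ range J, l2norm (u j) ≤ l2norm g) :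
    (1 - δ - θ) * l2norm g ^ 2 ≤ F *ᵥ g ⬝ᵥ F *ᵥ (g + ∑ j ∈ range J, u j) := by
  have hsum : -(θ * l2norm g ^ 2) ≤ ∑ j ∈ range J, F *ᵥ g ⬝ᵥ F *ᵥ u j :=
    calc -(θ * l2norm g ^ 2) ≤ -∑ j ∈ range J, θ * (l2norm (u j) * l2norm g) := by
          rw [← mul_sum, ← sum_mul, sq]
          gcongr
          exact l2norm_nonneg g
      _ ≤ ∑ j ∈ range J, F *ᵥ g ⬝ᵥ F *ᵥ u j := by
          rw [← sum_neg_distrib]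
          exact sum_le_sum fun j _ => neg_le_of_abs_le (dotProduct_comm (F *ᵥ u j) _ ▸ hcross j)
  rw [mulVec_add, mulVec_sum, dotProduct_add, dotProduct_sum, ← l2norm_sq_eq_dotProduct]
  linarith

theorem l2norm_le_of_cone_of_correlation (hm : 0 < m) {δ θ ε : ℝ} (hδθ : δ + θ < 1)
    (hθ0 : 0 ≤ θ) (hε : 0 ≤ ε)
    (hδ : ∀ c, IsSparse (3 * m) c → (1 - δ) * l2norm c ^ 2 ≤ l2norm (F *ᵥ c) ^ 2)
    (hθ : ∀ c c', IsSparse (2 * m) c → IsSparse (3 * m) c' → (∀ i, c i = 0 ∨ c' i = 0) →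
      |F *ᵥ c ⬝ᵥ F *ᵥ c'| ≤ θ * (l2norm c * l2norm c'))
    {h : Fin p → ℝ} {T₀ : Finset (Fin p)} (hT₀ : #T₀ ≤ 2 * m)
    (hcone : ∑ i ∈ T₀ᶜ, |h i| ≤ ∑ i ∈ T₀, |h i|) (hcorr : ∀ j, |(Fᵀ *ᵥ (F *ᵥ h)) j| ≤ ε) :
    l2norm h ≤ √2 * (√(3 * m) * ε / (1 - δ - θ)) := by
  obtain ⟨T, J, u, hT₀T, hTcard, hu, huT, hdecomp, htail⟩ := exists_tail_decomposition hm h T₀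
  set g := Set.indicator ↑T h
  have hg : IsSparse (3 * m) g := isSparse_indicator (by omega) h
  have hm' : (0 : ℝ) < √(2 * m) := by positivity
  have hu_le : ∑ j ∈ range J, l2norm (u j) ≤ l2norm g :=
    calc _ ≤ (∑ i ∈ T₀ᶜ, |h i|) / √(2 * m) := htail
      _ ≤ l1norm (Set.indicator ↑T₀ h) / √(2 * m) := by
          gcongr
          simpa [l1norm, Set.indicator_apply, apply_ite] using hcone
      _ ≤ l2norm (Set.indicator ↑T₀ h) := by
          rw [div_le_iff₀ hm', mul_comm]
          exact_mod_cast l1norm_le_sqrt_mul_l2norm (isSparse_indicator hT₀ h)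
      _ ≤ l2norm g := l2norm_indicator_mono hT₀T h
  have hlower : (1 - δ - θ) * l2norm g ^ 2 ≤ F *ᵥ g ⬝ᵥ F *ᵥ h := by
    rw [hdecomp]
    refine one_sub_sub_mul_sq_le_dotProduct F hθ0 (hδ g hg) (fun j => hθ _ _ (hu j) hg ?_) hu_le
    exact fun i => (em (i ∈ T)).imp (huT j i) (Set.indicator_of_notMem · h)
  have hupper : F *ᵥ g ⬝ᵥ F *ᵥ h ≤ √(3 * m) * ε * l2norm g := by
    rw [mulVec_dotProduct_mulVec]
    have hl1 := l1norm_le_sqrt_mul_l2norm hg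
    push_cast at hl1
    calc _ ≤ l1norm g * ε := dotProduct_le_l1norm_mul hcorr
      _ ≤ √(3 * m) * l2norm g * ε := mul_le_mul_of_nonneg_right hl1 hε
      _ = _ := by ring
  have hg_le : l2norm g ≤ √(3 * m) * ε / (1 - δ - θ) := by
    rw [le_div_iff₀ (by linarith)]
    rcases (l2norm_nonneg g).eq_or_lt with hg0 | hgpos
    · rw [← hg0, zero_mul]
      positivity
    · nlinarith
  have hrest : l2norm (h - g) ≤ l2norm g := by
    rw [hdecomp, add_sub_cancel_left]
    exact (l2norm_sum_le _ _).trans hu_le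
  calc l2norm h ≤ √2 * l2norm g := l2norm_le_sqrt_two_mul_l2norm_indicator hrest
    _ ≤ √2 * (√(3 * m) * ε / (1 - δ - θ)) := by gcongr

end Estimate

lemma sum_compl_abs_sub_le_sum_abs_sub {p : ℕ} {T : Finset (Fin p)} {v w : Fin p → ℝ}
    (hv : ∀ i ∉ T, v i = 0) (hwv : l1norm w ≤ l1norm v) :
    ∑ i ∈ Tᶜ, |w i - v i| ≤ ∑ i ∈ T, |w i - v i| := by
  have hl1v : l1norm v = ∑ i ∈ T, |v i| :=
    (sum_subset T.subset_univ fun i _ hi => by simp [hv i hi]).symm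
  have hl1w : l1norm w = ∑ i ∈ T, |w i| + ∑ i ∈ Tᶜ, |w i - v i| := by
    rw [l1norm, ← sum_add_sum_compl T]
    exact congrArg _ (sum_congr rfl fun i hi => by simp [hv i (mem_compl.1 hi)])
  have hT : ∑ i ∈ T, |v i| - ∑ i ∈ T, |w i| ≤ ∑ i ∈ T, |w i - v i| := by
    rw [← sum_sub_distrib]
    exact sum_le_sum fun i _ => abs_sub_comm (v i) (w i) ▸ abs_sub_abs_le_abs_sub _ _
  linarith

lemma abs_transpose_mulVec_mulVec_sub_le {n p : ℕ} (F : Matrix (Fin n) (Fin p) ℝ)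
    {y : Fin n → ℝ} {x x' : Fin p → ℝ} {lam : ℝ} (hx : ∀ j, |(Fᵀ *ᵥ (y - F *ᵥ x)) j| ≤ lam)
    (hx' : ∀ j, |(Fᵀ *ᵥ (y - F *ᵥ x')) j| ≤ lam) (j : Fin p) :
    |(Fᵀ *ᵥ (F *ᵥ (x - x'))) j| ≤ 2 * lam := by
  have hdiff : Fᵀ *ᵥ (F *ᵥ (x - x')) = Fᵀ *ᵥ (y - F *ᵥ x') - Fᵀ *ᵥ (y - F *ᵥ x) := by
    rw [← mulVec_sub, mulVec_sub]
    abel_nf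
  rw [hdiff, Pi.sub_apply]
  linarith [abs_sub ((Fᵀ *ᵥ (y - F *ᵥ x')) j) ((Fᵀ *ᵥ (y - F *ᵥ x)) j), hx j, hx' j]

/-- Dantzig selector with bounded-correlation noise for `k`-sparse `β`.
With `k = 2*m` even, `δ_{1.5k} + θ_{k,1.5k} < 1`, `y = Fβ + z`, `‖Fᵀz‖_∞ ≤ λ`, if `β̂`
minimizes the ℓ₁ norm subject to `‖Fᵀ(y - Fγ)‖_∞ ≤ λ`, then `‖β̂ - β‖₂ ≤ C₁ √k λ`. -/
theorem dantzig_selector_error_sparse {n p m : ℕ} (F : Matrix (Fin n) (Fin p) ℝ)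
    (hm : 1 ≤ m) (hp : 5 * m ≤ p)
    (hcond : ripConst F (3 * m) + roConst F (2 * m) (3 * m) < 1)
    (β : Fin p → ℝ) (hβ : IsSparse (2 * m) β)
    (z : Fin n → ℝ) (y : Fin n → ℝ) (hy : y = fun i => F.mulVec β i + z i)
    (lam : ℝ) (hlam : 0 ≤ lam)
    (hz : ∀ j, |(Matrix.transpose F).mulVec z j| ≤ lam)
    (βhat : Fin p → ℝ)
    (hfeas : ∀ j, |(Matrix.transpose F).mulVec (fun i => y i - F.mulVec βhat i) j| ≤ lam)
    (hmin : ∀ γ : Fin p → ℝ,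
      (∀ j, |(Matrix.transpose F).mulVec (fun i => y i - F.mulVec γ i) j| ≤ lam) →
      l1norm βhat ≤ l1norm γ) :
    l2norm (fun i => βhat i - β i) ≤
      (2 * Real.sqrt 3 / (1 - ripConst F (3 * m) - roConst F (2 * m) (3 * m))) *
        Real.sqrt (2 * m) * lam := by
  obtain ⟨hθ0, hθ⟩ := roConst_spec F (k := 2 * m) (k' := 3 * m) (by omega) (by omega) (by omega)
  obtain ⟨T₀, hT₀, hβT₀⟩ := hβ
  have hβfeas : ∀ j, |(Fᵀ *ᵥ (y - F *ᵥ β)) j| ≤ lam := by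
    have hres : y - F *ᵥ β = z := by
      funext i
      simp [hy]
    rwa [hres]
  have hestimate := l2norm_le_of_cone_of_correlation F (by omega) hcond hθ0 (by positivity)
    (fun c hc => one_sub_ripConst_mul_sq_le F (by omega) (by omega) hc) hθ hT₀
    (sum_compl_abs_sub_le_sum_abs_sub hβT₀ (hmin β hβfeas))
    (abs_transpose_mulVec_mulVec_sub_le F hfeas hβfeas)
  calc l2norm (fun i => βhat i - β i)
      ≤ √2 * (√(3 * m) * (2 * lam) / (1 - ripConst F (3 * m) - roConst F (2 * m) (3 * m))) :=
        hestimate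
    _ = _ := by
        rw [Real.sqrt_mul zero_le_three, Real.sqrt_mul zero_le_two]
        ring
end

section
/- Let F be a real n×p matrix and let k be a positive integer divisible by 5 with 4k ≤ p. If δ_{3k} + 3δ_{4k} < 2, then δ_{2.4k} + θ_{1.6k, 2.4k} < 1, where δ and θ denote the restricted isometry and restricted orthogonality constants of F. -/
namespace CRTAux

/-- sum of squares -/
noncomputable def Sq {m : ℕ} (v : Fin m → ℝ) : ℝ := ∑ i, v i ^ 2

lemma Sq_nonneg {m : ℕ} (v : Fin m → ℝ) : 0 ≤ Sq v :=
  Finset.sum_nonneg fun _ _ => sq_nonneg _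

lemma l2norm_eq {m : ℕ} (v : Fin m → ℝ) : l2norm v = Real.sqrt (Sq v) := rfl

lemma l2norm_nonneg {m : ℕ} (v : Fin m → ℝ) : 0 ≤ l2norm v := Real.sqrt_nonneg _

lemma l2norm_sq {m : ℕ} (v : Fin m → ℝ) : l2norm v ^ 2 = Sq v :=
  Real.sq_sqrt (Sq_nonneg v)

def RIPset {n p : ℕ} (F : Matrix (Fin n) (Fin p) ℝ) (k : ℕ) : Set ℝ :=
  {δ : ℝ | ∀ c : Fin p → ℝ, IsSparse k c →
    Real.sqrt (1 - δ) * l2norm c ≤ l2norm (F.mulVec c) ∧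
    l2norm (F.mulVec c) ≤ Real.sqrt (1 + δ) * l2norm c}

def ROset {n p : ℕ} (F : Matrix (Fin n) (Fin p) ℝ) (k k' : ℕ) : Set ℝ :=
  {θ : ℝ | ∀ c c' : Fin p → ℝ, IsSparse k c → IsSparse k' c' →
    (∀ i, c i = 0 ∨ c' i = 0) →
    |∑ i, F.mulVec c i * F.mulVec c' i| ≤ θ * (l2norm c * l2norm c')}

lemma ripConst_eq {n p : ℕ} (F : Matrix (Fin n) (Fin p) ℝ) (k : ℕ) :
    ripConst F k = sInf (RIPset F k) := rfl

lemma roConst_eq {n p : ℕ} (F : Matrix (Fin n) (Fin p) ℝ) (k k' : ℕ) :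
    roConst F k k' = sInf (ROset F k k') := rfl

/-- RIP sets shrink as k grows. -/
lemma RIPset_antitone {n p : ℕ} (F : Matrix (Fin n) (Fin p) ℝ) {k k' : ℕ} (hk : k ≤ k') :
    RIPset F k' ⊆ RIPset F k := by
  intro δ hδ c hc
  exact hδ c ⟨hc.choose, hc.choose_spec.1.trans hk, hc.choose_spec.2⟩

/-- The RIP set is nonempty. -/
lemma RIPset_nonempty {n p : ℕ} (F : Matrix (Fin n) (Fin p) ℝ) (k : ℕ) :
    (RIPset F k).Nonempty := by
  set M : ℝ := ∑ i, ∑ j, F i j ^ 2 with hM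
  have hM0 : 0 ≤ M := Finset.sum_nonneg fun _ _ => Finset.sum_nonneg fun _ _ => sq_nonneg _
  refine ⟨max 1 M, fun c _ => ?_⟩
  have h1 : Real.sqrt (1 - max 1 M) = 0 :=
    Real.sqrt_eq_zero'.mpr (by simp [le_max_iff])
  constructor
  · rw [h1, zero_mul]; exact l2norm_nonneg _
  · have hcs : Sq (F.mulVec c) ≤ M * Sq c := by
      have : ∀ i : Fin n, (F.mulVec c i) ^ 2 ≤ (∑ j, F i j ^ 2) * Sq c := by
        intro i
        exact Finset.sum_mul_sq_le_sq_mul_sq Finset.univ (fun j => F i j) c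
      calc Sq (F.mulVec c) ≤ ∑ i, (∑ j, F i j ^ 2) * Sq c :=
            Finset.sum_le_sum fun i _ => this i
        _ = M * Sq c := by rw [← Finset.sum_mul]
    have hle : Sq (F.mulVec c) ≤ (1 + max 1 M) * Sq c := by
      have : M ≤ 1 + max 1 M := le_add_of_nonneg_of_le zero_le_one (le_max_right _ _)
      nlinarith [Sq_nonneg c]
    calc l2norm (F.mulVec c) = Real.sqrt (Sq (F.mulVec c)) := rfl
      _ ≤ Real.sqrt ((1 + max 1 M) * Sq c) := Real.sqrt_le_sqrt hle
      _ = Real.sqrt (1 + max 1 M) * Real.sqrt (Sq c) :=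
          Real.sqrt_mul (by positivity) _
      _ = Real.sqrt (1 + max 1 M) * l2norm c := rfl

/-- standard basis vector -/
def e {p : ℕ} (i : Fin p) : Fin p → ℝ := fun j => if j = i then 1 else 0

lemma e_sparse {p : ℕ} (i : Fin p) (k : ℕ) (hk : 1 ≤ k) : IsSparse k (e i) :=
  ⟨{i}, by simpa using hk, fun j hj => by simp [e, Finset.mem_singleton.not.mp hj]⟩

lemma Sq_e {p : ℕ} (i : Fin p) : Sq (e i) = 1 := by
  simp [Sq, e, Finset.sum_ite_eq']

lemma l2norm_e {p : ℕ} (i : Fin p) : l2norm (e i) = 1 := by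
  rw [l2norm_eq, Sq_e, Real.sqrt_one]

/-- members of the RIP set are nonnegative, provided p ≥ 1 and k ≥ 1. -/
lemma RIPset_nonneg {n p : ℕ} (F : Matrix (Fin n) (Fin p) ℝ) {k : ℕ} (hk : 1 ≤ k)
    (hp : 0 < p) {δ : ℝ} (hδ : δ ∈ RIPset F k) : 0 ≤ δ := by
  obtain ⟨h1, h2⟩ := hδ (e ⟨0, hp⟩) (e_sparse _ _ hk)
  rw [l2norm_e, mul_one] at h1 h2
  by_contra hneg
  push_neg at hneg
  have hlt : Real.sqrt (1 + δ) < Real.sqrt (1 - δ) := by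
    rcases le_or_gt 0 (1 + δ) with hc | hc
    · exact Real.sqrt_lt_sqrt hc (by linarith)
    · rw [Real.sqrt_eq_zero'.mpr hc.le]
      exact Real.sqrt_pos.mpr (by linarith)
  linarith [h1.trans h2]

lemma ripConst_nonneg {n p : ℕ} (F : Matrix (Fin n) (Fin p) ℝ) {k : ℕ} (hk : 1 ≤ k)
    (hp : 0 < p) : 0 ≤ ripConst F k :=
  Real.sInf_nonneg fun _ hδ => RIPset_nonneg F hk hp hδ

lemma ripConst_mono {n p : ℕ} (F : Matrix (Fin n) (Fin p) ℝ) {k k' : ℕ} (hk : k ≤ k')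
    (hk1 : 1 ≤ k) (hp : 0 < p) : ripConst F k ≤ ripConst F k' := by
  rw [ripConst_eq, ripConst_eq]
  exact csInf_le_csInf ⟨0, fun x hx => RIPset_nonneg F hk1 hp hx⟩
    (RIPset_nonempty F k') (RIPset_antitone F hk)

/-- members of the RO set are nonnegative when p ≥ 2. -/
lemma ROset_nonneg {n p : ℕ} (F : Matrix (Fin n) (Fin p) ℝ) {k k' : ℕ} (hk : 1 ≤ k)
    (hk' : 1 ≤ k') (hp : 2 ≤ p) {θ : ℝ} (hθ : θ ∈ ROset F k k') : 0 ≤ θ := by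
  have h0 : (0 : ℕ) < p := by omega
  have h1 : (1 : ℕ) < p := by omega
  have := hθ (e ⟨0, h0⟩) (e ⟨1, h1⟩) (e_sparse _ _ hk) (e_sparse _ _ hk')
    (fun i => by
      by_cases h : i = (⟨0, h0⟩ : Fin p)
      · right; simp [e, h, Fin.ext_iff]
      · left; simp [e, h])
  rw [l2norm_e, l2norm_e, mul_one, mul_one] at this
  exact (abs_nonneg _).trans this

lemma sparse_add {p k k' : ℕ} {c c' : Fin p → ℝ} (hc : IsSparse k c) (hc' : IsSparse k' c') :
    IsSparse (k + k') (c + c') := by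
  obtain ⟨s, hs, hsv⟩ := hc
  obtain ⟨t, ht, htv⟩ := hc'
  refine ⟨s ∪ t, le_trans (Finset.card_union_le s t) (by omega), fun i hi => ?_⟩
  simp only [Finset.mem_union, not_or] at hi
  simp [hsv i hi.1, htv i hi.2]

lemma sparse_neg {p k : ℕ} {c : Fin p → ℝ} (hc : IsSparse k c) : IsSparse k (-c) := by
  obtain ⟨s, hs, hsv⟩ := hc
  exact ⟨s, hs, fun i hi => by simp [hsv i hi]⟩

lemma sparse_smul {p k : ℕ} (t : ℝ) {c : Fin p → ℝ} (hc : IsSparse k c) :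
    IsSparse k (fun i => t * c i) := by
  obtain ⟨s, hs, hsv⟩ := hc
  exact ⟨s, hs, fun i hi => by simp [hsv i hi]⟩

/-- Sq of disjoint sum. -/
lemma Sq_add_disjoint {p : ℕ} {c c' : Fin p → ℝ} (hd : ∀ i, c i = 0 ∨ c' i = 0) :
    Sq (c + c') = Sq c + Sq c' := by
  unfold Sq
  rw [← Finset.sum_add_distrib]
  refine Finset.sum_congr rfl fun i _ => ?_
  rcases hd i with h | h <;> simp [h]

/-- squared upper RIP bound. -/
lemma sq_upper {n p : ℕ} {F : Matrix (Fin n) (Fin p) ℝ} {k : ℕ} {δ : ℝ}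
    (hδ : δ ∈ RIPset F k) (hδ0 : 0 ≤ δ) {c : Fin p → ℝ} (hc : IsSparse k c) :
    Sq (F.mulVec c) ≤ (1 + δ) * Sq c := by
  have h := (hδ c hc).2
  have h2 := mul_self_le_mul_self (l2norm_nonneg _) h
  calc Sq (F.mulVec c) = l2norm (F.mulVec c) * l2norm (F.mulVec c) := by
        rw [← sq, l2norm_sq]
    _ ≤ (Real.sqrt (1 + δ) * l2norm c) * (Real.sqrt (1 + δ) * l2norm c) := h2
    _ = (Real.sqrt (1 + δ) * Real.sqrt (1 + δ)) * (l2norm c * l2norm c) := by ring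
    _ = (1 + δ) * Sq c := by
        rw [Real.mul_self_sqrt (by linarith), ← sq, l2norm_sq]

/-- squared lower RIP bound. -/
lemma sq_lower {n p : ℕ} {F : Matrix (Fin n) (Fin p) ℝ} {k : ℕ} {δ : ℝ}
    (hδ : δ ∈ RIPset F k) {c : Fin p → ℝ} (hc : IsSparse k c) :
    (1 - δ) * Sq c ≤ Sq (F.mulVec c) := by
  rcases le_or_gt (1 - δ) 0 with hneg | hpos
  · exact le_trans (mul_nonpos_of_nonpos_of_nonneg hneg (Sq_nonneg c)) (Sq_nonneg _)
  · have h := (hδ c hc).1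
    have h2 := mul_self_le_mul_self (mul_nonneg (Real.sqrt_nonneg _) (l2norm_nonneg _)) h
    calc (1 - δ) * Sq c
        = (Real.sqrt (1 - δ) * l2norm c) * (Real.sqrt (1 - δ) * l2norm c) := by
          rw [show (Real.sqrt (1-δ) * l2norm c) * (Real.sqrt (1-δ) * l2norm c)
              = (Real.sqrt (1-δ) * Real.sqrt (1-δ)) * (l2norm c * l2norm c) by ring,
            Real.mul_self_sqrt hpos.le, ← sq, l2norm_sq]
      _ ≤ l2norm (F.mulVec c) * l2norm (F.mulVec c) := h2
      _ = Sq (F.mulVec c) := by rw [← sq, l2norm_sq]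

/-- one-sided polarization bound. -/
lemma ip_le {n p : ℕ} {F : Matrix (Fin n) (Fin p) ℝ} {k k' : ℕ} {δ : ℝ}
    (hδ : δ ∈ RIPset F (k + k')) (hδ0 : 0 ≤ δ)
    {c c' : Fin p → ℝ} (hc : IsSparse k c) (hc' : IsSparse k' c')
    (hd : ∀ i, c i = 0 ∨ c' i = 0) :
    ∑ i, F.mulVec c i * F.mulVec c' i ≤ δ * (Sq c + Sq c') / 2 := by
  have hplus : IsSparse (k + k') (c + c') := sparse_add hc hc'
  have hminus : IsSparse (k + k') (c + (-c')) := sparse_add hc (sparse_neg hc')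
  have hdm : ∀ i, c i = 0 ∨ (-c') i = 0 := fun i => by
    rcases hd i with h | h
    · exact Or.inl h
    · exact Or.inr (by simp [h])
  have hSp : Sq (c + c') = Sq c + Sq c' := Sq_add_disjoint hd
  have hSm : Sq (c + (-c')) = Sq c + Sq c' := by
    rw [Sq_add_disjoint hdm]
    congr 1
    unfold Sq
    exact Finset.sum_congr rfl fun i _ => by simp
  have hup := sq_upper hδ hδ0 hplus
  have hlo := sq_lower hδ hminus
  rw [hSp] at hup
  rw [hSm] at hlo
  -- Sq (F (c+c')) - Sq (F (c-c')) = 4 * ip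
  have hpol : Sq (F.mulVec (c + c')) - Sq (F.mulVec (c + (-c')))
      = 4 * ∑ i, F.mulVec c i * F.mulVec c' i := by
    rw [Matrix.mulVec_add, Matrix.mulVec_add, Matrix.mulVec_neg]
    unfold Sq
    rw [← Finset.sum_sub_distrib, Finset.mul_sum]
    refine Finset.sum_congr rfl fun i _ => ?_
    simp only [Pi.add_apply, Pi.neg_apply]
    ring
  linarith

/-- polarization bound with absolute value. -/
lemma ip_abs_le {n p : ℕ} {F : Matrix (Fin n) (Fin p) ℝ} {k k' : ℕ} {δ : ℝ}
    (hδ : δ ∈ RIPset F (k + k')) (hδ0 : 0 ≤ δ)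
    {c c' : Fin p → ℝ} (hc : IsSparse k c) (hc' : IsSparse k' c')
    (hd : ∀ i, c i = 0 ∨ c' i = 0) :
    |∑ i, F.mulVec c i * F.mulVec c' i| ≤ δ * (Sq c + Sq c') / 2 := by
  rw [abs_le]
  constructor
  · have hdm : ∀ i, c i = 0 ∨ (-c') i = 0 := fun i => by
      rcases hd i with h | h
      · exact Or.inl h
      · exact Or.inr (by simp [h])
    have := ip_le hδ hδ0 hc (sparse_neg hc') hdm
    have heq : ∑ i, F.mulVec c i * F.mulVec (-c') i
        = -∑ i, F.mulVec c i * F.mulVec c' i := by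
      rw [Matrix.mulVec_neg, ← Finset.sum_neg_distrib]
      exact Finset.sum_congr rfl fun i _ => by simp
    have hSq : Sq (-c') = Sq c' := by
      unfold Sq; exact Finset.sum_congr rfl fun i _ => by simp
    rw [heq, hSq] at this
    linarith
  · exact ip_le hδ hδ0 hc hc' hd

/-- RIPset (k+k') ⊆ ROset k k'. -/
lemma RIPset_subset_ROset {n p : ℕ} (F : Matrix (Fin n) (Fin p) ℝ) {k k' : ℕ}
    (hk : 1 ≤ k) (hp : 0 < p) : RIPset F (k + k') ⊆ ROset F k k' := by
  intro δ hδ c c' hc hc' hd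
  have hδ0 : 0 ≤ δ := RIPset_nonneg F (by omega) hp hδ
  -- scale: u = b • c, v = a • c where a = l2norm c, b = l2norm c'
  set a : ℝ := l2norm c with ha
  set b : ℝ := l2norm c' with hb
  have ha0 : 0 ≤ a := l2norm_nonneg _
  have hb0 : 0 ≤ b := l2norm_nonneg _
  have haSq : Sq c = a ^ 2 := (l2norm_sq c).symm
  have hbSq : Sq c' = b ^ 2 := (l2norm_sq c').symm
  rcases eq_or_lt_of_le ha0 with haz | hap
  · -- a = 0 : c = 0
    have hc0 : Sq c = 0 := by rw [haSq, ← haz]; norm_num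
    have hcz : ∀ i, F.mulVec c i = 0 := by
      have hz : ∀ i, c i = 0 := by
        intro i
        have := (Finset.sum_eq_zero_iff_of_nonneg (fun j _ => sq_nonneg (c j))).mp hc0 i
          (Finset.mem_univ i)
        exact pow_eq_zero_iff (n := 2) (by norm_num) |>.mp this
      intro i
      simp [Matrix.mulVec, dotProduct]
      exact Finset.sum_eq_zero fun j _ => by rw [hz j]; ring
    have hsum : ∑ i, F.mulVec c i * F.mulVec c' i = 0 :=
      Finset.sum_eq_zero fun i _ => by rw [hcz i]; ring
    rw [hsum, abs_zero]
    exact mul_nonneg hδ0 (mul_nonneg ha0 hb0)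
  rcases eq_or_lt_of_le hb0 with hbz | hbp
  · have hc0 : Sq c' = 0 := by rw [hbSq, ← hbz]; norm_num
    have hcz : ∀ i, F.mulVec c' i = 0 := by
      have hz : ∀ i, c' i = 0 := by
        intro i
        have := (Finset.sum_eq_zero_iff_of_nonneg (fun j _ => sq_nonneg (c' j))).mp hc0 i
          (Finset.mem_univ i)
        exact pow_eq_zero_iff (n := 2) (by norm_num) |>.mp this
      intro i
      simp [Matrix.mulVec, dotProduct]
      exact Finset.sum_eq_zero fun j _ => by rw [hz j]; ring
    have hsum : ∑ i, F.mulVec c i * F.mulVec c' i = 0 :=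
      Finset.sum_eq_zero fun i _ => by rw [hcz i]; ring
    rw [hsum, abs_zero]
    exact mul_nonneg hδ0 (mul_nonneg ha0 hb0)
  -- both positive
  set u : Fin p → ℝ := fun i => b * c i with hu
  set v : Fin p → ℝ := fun i => a * c' i with hv
  have hus : IsSparse k u := sparse_smul b hc
  have hvs : IsSparse k' v := sparse_smul a hc'
  have hduv : ∀ i, u i = 0 ∨ v i = 0 := fun i => by
    rcases hd i with h | h
    · exact Or.inl (by simp [hu, h])
    · exact Or.inr (by simp [hv, h])
  have key := ip_abs_le hδ hδ0 hus hvs hduv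
  have hSu : Sq u = b ^ 2 * a ^ 2 := by
    have : Sq u = b ^ 2 * Sq c := by
      unfold Sq
      rw [Finset.mul_sum]
      exact Finset.sum_congr rfl fun i _ => by simp only [hu]; ring
    rw [this, haSq]
  have hSv : Sq v = a ^ 2 * b ^ 2 := by
    have : Sq v = a ^ 2 * Sq c' := by
      unfold Sq
      rw [Finset.mul_sum]
      exact Finset.sum_congr rfl fun i _ => by simp only [hv]; ring
    rw [this, hbSq]
  have hipuv : ∑ i, F.mulVec u i * F.mulVec v i
      = (a * b) * ∑ i, F.mulVec c i * F.mulVec c' i := by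
    have hub : F.mulVec u = b • F.mulVec c := by
      rw [show u = b • c from rfl, Matrix.mulVec_smul]
    have hva : F.mulVec v = a • F.mulVec c' := by
      rw [show v = a • c' from rfl, Matrix.mulVec_smul]
    rw [hub, hva, Finset.mul_sum]
    exact Finset.sum_congr rfl fun i _ => by simp; ring
  rw [hipuv, hSu, hSv, abs_mul, abs_of_nonneg (mul_nonneg ha0 hb0)] at key
  have hab : 0 < a * b := mul_pos hap hbp
  have hmul : (a * b) * |∑ i, F.mulVec c i * F.mulVec c' i|
      ≤ (a * b) * (δ * (l2norm c * l2norm c')) := by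
    calc (a * b) * |∑ i, F.mulVec c i * F.mulVec c' i|
        ≤ δ * (b ^ 2 * a ^ 2 + a ^ 2 * b ^ 2) / 2 := key
      _ = (a * b) * (δ * (a * b)) := by ring
      _ = (a * b) * (δ * (l2norm c * l2norm c')) := by rw [ha, hb]
  exact le_of_mul_le_mul_left hmul hab

theorem roConst_le_ripConst {n p : ℕ} (F : Matrix (Fin n) (Fin p) ℝ) {k k' : ℕ}
    (hk : 1 ≤ k) (hk' : 1 ≤ k') (hp : 2 ≤ p) :
    roConst F k k' ≤ ripConst F (k + k') := by
  rw [roConst_eq, ripConst_eq]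
  exact csInf_le_csInf ⟨0, fun x hx => ROset_nonneg F hk hk' hp hx⟩
    (RIPset_nonempty F (k + k')) (RIPset_subset_ROset F hk (by omega))

end CRTAux

/-- With `k = 5*m` (so that `2.4k = 12m` and `1.6k = 8m` are integers),
`δ_{3k} + 3δ_{4k} < 2` implies `δ_{2.4k} + θ_{1.6k, 2.4k} < 1`. -/
theorem crt_condition_implies_cond {n p m : ℕ} (F : Matrix (Fin n) (Fin p) ℝ)
    (hm : 1 ≤ m) (hp : 20 * m ≤ p)
    (h : ripConst F (15 * m) + 3 * ripConst F (20 * m) < 2) :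
    ripConst F (12 * m) + roConst F (8 * m) (12 * m) < 1 := by
  have hp0 : 0 < p := by omega
  have hp2 : 2 ≤ p := by omega
  have h1 : ripConst F (12 * m) ≤ ripConst F (15 * m) :=
    CRTAux.ripConst_mono F (by omega) (by omega) hp0
  have h2 : roConst F (8 * m) (12 * m) ≤ ripConst F (20 * m) := by
    have := CRTAux.roConst_le_ripConst F (k := 8 * m) (k' := 12 * m) (by omega) (by omega) hp2
    convert this using 2
    omega
  have h3 : ripConst F (15 * m) ≤ ripConst F (20 * m) :=
    CRTAux.ripConst_mono F (by omega) (by omega) hp0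
  linarith
end

section
/- Let F be a real n×p matrix whose columns f₁,…,f_p all have unit ℓ₂ norm, and let M = max_{i≠j} |⟨f_i, f_j⟩| be its coherence bound. Then for every 1 ≤ k ≤ p, the k-restricted isometry constant of F satisfies δ_k ≤ (k−1)M. -/
/-- The coherence bound `M = max_{i ≠ j} |⟨f_i, f_j⟩|` of a matrix `F` with columns `f_i`. -/
noncomputable def coherence {n p : ℕ} (F : Matrix (Fin n) (Fin p) ℝ) : ℝ :=
  sSup {x : ℝ | ∃ i j : Fin p, i ≠ j ∧ x = |∑ r, F r i * F r j|}

/-- For `F` with unit-ℓ₂-norm columns and coherence bound `M`,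
`δ_k ≤ (k - 1)M` for every `1 ≤ k ≤ p`. -/
theorem ripConst_le_coherence {n p : ℕ} (F : Matrix (Fin n) (Fin p) ℝ)
    (hcols : ∀ j, l2norm (fun i => F i j) = 1)
    (k : ℕ) (hk : 1 ≤ k) (hkp : k ≤ p) :
    ripConst F k ≤ (k - 1 : ℝ) * coherence F := by
  have hp : 0 < p := lt_of_lt_of_le hk hkp
  set M := coherence F with hMdef
  -- boundedness of coherence set
  have hfin : {x : ℝ | ∃ i j : Fin p, i ≠ j ∧ x = |∑ r, F r i * F r j|}.Finite := by
    apply Set.Finite.subset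
      (Set.finite_range (fun ij : Fin p × Fin p => |∑ r, F r ij.1 * F r ij.2|))
    rintro x ⟨i, j, hij, rfl⟩
    exact ⟨(i, j), rfl⟩
  have hM_ub : ∀ i j : Fin p, i ≠ j → |∑ r, F r i * F r j| ≤ M := fun i j hij =>
    le_csSup hfin.bddAbove ⟨i, j, hij, rfl⟩
  have hM0 : 0 ≤ M := by
    by_cases h : ∃ i j : Fin p, i ≠ j
    · obtain ⟨i, j, hij⟩ := h
      exact le_trans (abs_nonneg _) (hM_ub i j hij)
    · have he : {x : ℝ | ∃ i j : Fin p, i ≠ j ∧ x = |∑ r, F r i * F r j|} = ∅ := by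
        ext x
        simp only [Set.mem_setOf_eq, Set.mem_empty_iff_false, iff_false]
        rintro ⟨i, j, hij, -⟩
        exact h ⟨i, j, hij⟩
      rw [hMdef, coherence, he, Real.sSup_empty]
  have hk1 : (0:ℝ) ≤ (k:ℝ) - 1 := by
    have : (1:ℝ) ≤ (k:ℝ) := by exact_mod_cast hk
    linarith
  -- diagonal of Gram matrix
  have hGdiag : ∀ j : Fin p, ∑ r, F r j ^ 2 = 1 := by
    intro j
    have h1 := hcols j
    rw [l2norm] at h1
    have h2 : (0:ℝ) ≤ ∑ r, F r j ^ 2 := Finset.sum_nonneg fun r _ => sq_nonneg _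
    nlinarith [Real.sq_sqrt h2]
  apply csInf_le
  · -- bounded below by 0
    refine ⟨0, ?_⟩
    rintro δ hδ
    set i0 : Fin p := ⟨0, hp⟩
    set c : Fin p → ℝ := fun j => if j = i0 then 1 else 0 with hc
    have hsp : IsSparse k c := by
      refine ⟨{i0}, by simpa using hk, ?_⟩
      intro i hi
      simp only [Finset.mem_singleton] at hi
      simp [hc, hi]
    have hl2c : l2norm c = 1 := by
      rw [l2norm]
      have : ∑ j, c j ^ 2 = 1 := by
        simp [hc, apply_ite (· ^ (2:ℕ)), Finset.sum_ite_eq']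
      rw [this, Real.sqrt_one]
    have hFc : F.mulVec c = fun r => F r i0 := by
      funext r
      simp [Matrix.mulVec, dotProduct, hc, mul_ite, Finset.sum_ite_eq']
    have hl2Fc : l2norm (F.mulVec c) = 1 := by
      rw [hFc]; exact hcols i0
    obtain ⟨-, h2⟩ := hδ c hsp
    rw [hl2c, hl2Fc, mul_one] at h2
    by_cases h : 0 ≤ 1 + δ
    · nlinarith [Real.sq_sqrt h]
    · exfalso
      have hz : Real.sqrt (1 + δ) = 0 := Real.sqrt_eq_zero'.mpr (by linarith)
      rw [hz] at h2
      linarith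
  · -- membership
    rintro c ⟨s, hscard, hs0⟩
    set A := ∑ j, c j ^ 2 with hA
    have hA0 : 0 ≤ A := Finset.sum_nonneg fun j _ => sq_nonneg _
    have hl2c : l2norm c = Real.sqrt A := rfl
    set G : Fin p → Fin p → ℝ := fun j j' => ∑ r, F r j * F r j' with hG
    -- expansion of the quadratic form
    have hexpand : ∑ r, (F.mulVec c r) ^ 2 = ∑ j, ∑ j', c j * c j' * G j j' := by
      have : ∀ r, (F.mulVec c r) ^ 2 = ∑ j, ∑ j', c j * c j' * (F r j * F r j') := by
        intro r
        rw [show F.mulVec c r = ∑ j, F r j * c j from rfl, sq, Finset.sum_mul_sum]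
        apply Finset.sum_congr rfl; intro j _
        apply Finset.sum_congr rfl; intro j' _
        ring
      rw [Finset.sum_congr rfl fun r _ => this r, Finset.sum_comm]
      apply Finset.sum_congr rfl; intro j _
      rw [Finset.sum_comm]
      apply Finset.sum_congr rfl; intro j' _
      rw [hG, Finset.mul_sum]
    -- split diagonal and off-diagonal
    set E := ∑ j, ∑ j' ∈ Finset.univ.erase j, c j * c j' * G j j' with hE
    have hsplit : ∑ r, (F.mulVec c r) ^ 2 = A + E := by
      rw [hexpand, hA, hE, ← Finset.sum_add_distrib]
      apply Finset.sum_congr rfl; intro j _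
      have hGjj : G j j = 1 := by
        rw [hG]
        simpa [sq] using hGdiag j
      rw [← Finset.sum_erase_add Finset.univ
        (fun j' => c j * c j' * G j j') (Finset.mem_univ j)]
      simp only [hGjj]
      ring
    -- bound on the off-diagonal part
    have hB : (∑ j, |c j|) ^ 2 ≤ (k : ℝ) * A := by
      have hres : ∑ j, |c j| = ∑ j ∈ s, |c j| := by
        rw [← Finset.sum_subset (Finset.subset_univ s)]
        intro j _ hj
        rw [hs0 j hj, abs_zero]
      have hcs : (∑ j ∈ s, 1 * |c j|) ^ 2 ≤ (∑ j ∈ s, (1:ℝ)^2) * ∑ j ∈ s, |c j| ^ 2 :=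
        Finset.sum_mul_sq_le_sq_mul_sq s _ _
      simp only [one_mul, one_pow, Finset.sum_const, nsmul_eq_mul, mul_one, sq_abs] at hcs
      have h1 : ∑ j ∈ s, c j ^ 2 ≤ A :=
        Finset.sum_le_sum_of_subset_of_nonneg (Finset.subset_univ s)
          (fun j _ _ => sq_nonneg _)
      have h2 : (s.card : ℝ) ≤ (k : ℝ) := by exact_mod_cast hscard
      calc (∑ j, |c j|) ^ 2 = (∑ j ∈ s, |c j|) ^ 2 := by rw [hres]
        _ ≤ (s.card : ℝ) * ∑ j ∈ s, c j ^ 2 := hcs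
        _ ≤ (k : ℝ) * A := by
            apply mul_le_mul h2 h1 (Finset.sum_nonneg fun j _ => sq_nonneg _)
              (Nat.cast_nonneg k)
    have hEbound : |E| ≤ ((k:ℝ) - 1) * M * A := by
      have step1 : |E| ≤ ∑ j, ∑ j' ∈ Finset.univ.erase j, |c j| * |c j'| * M := by
        refine le_trans (Finset.abs_sum_le_sum_abs _ _) (Finset.sum_le_sum fun j _ => ?_)
        refine le_trans (Finset.abs_sum_le_sum_abs _ _) (Finset.sum_le_sum fun j' hj' => ?_)
        have hne : j' ≠ j := Finset.ne_of_mem_erase hj'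
        rw [abs_mul, abs_mul]
        exact mul_le_mul_of_nonneg_left (hM_ub j j' (Ne.symm hne))
          (mul_nonneg (abs_nonneg _) (abs_nonneg _))
      have step2 : ∑ j, ∑ j' ∈ Finset.univ.erase j, |c j| * |c j'| * M
          = ((∑ j, |c j|) ^ 2 - A) * M := by
        have : ∀ j : Fin p, ∑ j' ∈ Finset.univ.erase j, |c j| * |c j'| * M
            = |c j| * ((∑ j', |c j'|) - |c j|) * M := by
          intro j
          rw [show (∑ j' ∈ Finset.univ.erase j, |c j| * |c j'| * M)
              = |c j| * (∑ j' ∈ Finset.univ.erase j, |c j'|) * M by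
            rw [Finset.mul_sum, Finset.sum_mul]]
          rw [Finset.sum_erase_eq_sub (Finset.mem_univ j)]
        rw [Finset.sum_congr rfl fun j _ => this j, ← Finset.sum_mul]
        congr 1
        rw [Finset.sum_congr rfl fun j _ => mul_sub (|c j|) _ _, Finset.sum_sub_distrib,
          ← Finset.sum_mul, sq, hA]
        congr 1
        exact Finset.sum_congr rfl fun j _ => by rw [← sq_abs, sq]
      calc |E| ≤ ((∑ j, |c j|) ^ 2 - A) * M := by rw [← step2]; exact step1
        _ ≤ ((k:ℝ) * A - A) * M := by
            apply mul_le_mul_of_nonneg_right _ hM0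
            linarith
        _ = ((k:ℝ) - 1) * M * A := by ring
    -- conclude
    set δ := ((k:ℝ) - 1) * M with hδ
    have hδ0 : 0 ≤ δ := mul_nonneg hk1 hM0
    have hS : ∑ r, (F.mulVec c r) ^ 2 = A + E := hsplit
    have hupper : ∑ r, (F.mulVec c r) ^ 2 ≤ (1 + δ) * A := by
      rw [hS]
      have := (abs_le.mp hEbound).2
      nlinarith
    have hlower : (1 - δ) * A ≤ ∑ r, (F.mulVec c r) ^ 2 := by
      rw [hS]
      have := (abs_le.mp hEbound).1
      nlinarith
    have hl2F : l2norm (F.mulVec c) = Real.sqrt (∑ r, (F.mulVec c r) ^ 2) := rfl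
    constructor
    · rw [hl2F, hl2c]
      by_cases h : 0 ≤ 1 - δ
      · calc Real.sqrt (1 - δ) * Real.sqrt A = Real.sqrt ((1 - δ) * A) :=
            (Real.sqrt_mul h A).symm
          _ ≤ Real.sqrt (∑ r, (F.mulVec c r) ^ 2) := Real.sqrt_le_sqrt hlower
      · push_neg at h
        rw [Real.sqrt_eq_zero'.mpr (le_of_lt h), zero_mul]
        exact Real.sqrt_nonneg _
    · rw [hl2F, hl2c]
      calc Real.sqrt (∑ r, (F.mulVec c r) ^ 2) ≤ Real.sqrt ((1 + δ) * A) :=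
            Real.sqrt_le_sqrt hupper
        _ = Real.sqrt (1 + δ) * Real.sqrt A := Real.sqrt_mul (by linarith) A
end

section
/- Let F be a real n×p matrix whose columns f₁,…,f_p all have unit ℓ₂ norm, and let M = max_{i≠j} |⟨f_i, f_j⟩| be its coherence bound. Then for all positive integers k, k' with k + k' ≤ p, the restricted orthogonality constant of F satisfies θ_{k,k'} ≤ √(kk') · M. -/
lemma l1_le_sqrt_mul_l2 {p k : ℕ} {c : Fin p → ℝ} (h : IsSparse k c) :
    l1norm c ≤ Real.sqrt k * l2norm c := by
  obtain ⟨s, hs, hz⟩ := h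
  have h1 : l1norm c = ∑ i ∈ s, |c i| := by
    rw [l1norm]
    exact (Finset.sum_subset (Finset.subset_univ s)
      (fun i _ hi => by simp [hz i hi])).symm
  have h2 : (∑ i ∈ s, |c i|) ^ 2 ≤ (k : ℝ) * ∑ i, c i ^ 2 := by
    calc (∑ i ∈ s, |c i|) ^ 2 ≤ (s.card : ℝ) * ∑ i ∈ s, |c i| ^ 2 :=
          sq_sum_le_card_mul_sum_sq
      _ ≤ (k : ℝ) * ∑ i, c i ^ 2 := by
          refine mul_le_mul (by exact_mod_cast hs) ?_ (by positivity) (by positivity)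
          calc ∑ i ∈ s, |c i| ^ 2 = ∑ i ∈ s, c i ^ 2 :=
                Finset.sum_congr rfl fun i _ => sq_abs _
            _ ≤ ∑ i, c i ^ 2 := Finset.sum_le_univ_sum_of_nonneg fun i => sq_nonneg _
  rw [h1, l2norm, ← Real.sqrt_mul (by positivity)]
  calc (∑ i ∈ s, |c i|) = Real.sqrt ((∑ i ∈ s, |c i|) ^ 2) := by
        rw [Real.sqrt_sq (by positivity)]
    _ ≤ Real.sqrt ((k : ℝ) * ∑ i, c i ^ 2) := Real.sqrt_le_sqrt h2

/-- For `F` with unit-ℓ₂-norm columns and coherence bound `M`,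
`θ_{k,k'} ≤ √(kk') M` for all positive integers `k, k'` with `k + k' ≤ p`. -/
theorem roConst_le_coherence {n p : ℕ} (F : Matrix (Fin n) (Fin p) ℝ)
    (hcols : ∀ j, l2norm (fun i => F i j) = 1)
    (k k' : ℕ) (hk : 1 ≤ k) (hk' : 1 ≤ k') (hkp : k + k' ≤ p) :
    roConst F k k' ≤ Real.sqrt ((k : ℝ) * k') * coherence F := by
  have hp2 : 2 ≤ p := le_trans (add_le_add hk hk') hkp
  set M := coherence F with hM
  set i0 : Fin p := ⟨0, by omega⟩
  set j0 : Fin p := ⟨1, by omega⟩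
  have hij : i0 ≠ j0 := by simp [i0, j0, Fin.ext_iff]
  have hSfin : {x : ℝ | ∃ i j : Fin p, i ≠ j ∧ x = |∑ r, F r i * F r j|}.Finite := by
    apply Set.Finite.subset (Set.finite_range
      (fun q : Fin p × Fin p => |∑ r, F r q.1 * F r q.2|))
    rintro x ⟨i, j, _, rfl⟩
    exact ⟨(i, j), rfl⟩
  have hMge : ∀ i j : Fin p, i ≠ j → |∑ r, F r i * F r j| ≤ M :=
    fun i j h => le_csSup hSfin.bddAbove ⟨i, j, h, rfl⟩
  have hM0 : 0 ≤ M := le_trans (abs_nonneg _) (hMge i0 j0 hij)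
  -- key inequality
  have key : ∀ c c' : Fin p → ℝ, IsSparse k c → IsSparse k' c' →
      (∀ i, c i = 0 ∨ c' i = 0) →
      |∑ i, F.mulVec c i * F.mulVec c' i| ≤
        (Real.sqrt ((k : ℝ) * k') * M) * (l2norm c * l2norm c') := by
    intro c c' hc hc' hdisj
    have hre : ∑ i, F.mulVec c i * F.mulVec c' i =
        ∑ a, ∑ b, (c a * c' b) * (∑ r, F r a * F r b) := by
      simp only [Matrix.mulVec, dotProduct]
      calc ∑ i, (∑ a, F i a * c a) * (∑ b, F i b * c' b)
          = ∑ i, ∑ a, ∑ b, (F i a * c a) * (F i b * c' b) := by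
            exact Finset.sum_congr rfl fun i _ => by rw [Finset.sum_mul_sum]
        _ = ∑ a, ∑ b, ∑ i, (F i a * c a) * (F i b * c' b) := by
            rw [Finset.sum_comm]
            exact Finset.sum_congr rfl fun a _ => Finset.sum_comm
        _ = ∑ a, ∑ b, (c a * c' b) * (∑ r, F r a * F r b) := by
            refine Finset.sum_congr rfl fun a _ => Finset.sum_congr rfl fun b _ => ?_
            rw [Finset.mul_sum]
            exact Finset.sum_congr rfl fun r _ => by ring
    have hterm : ∀ a b : Fin p,
        |(c a * c' b) * (∑ r, F r a * F r b)| ≤ |c a| * |c' b| * M := by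
      intro a b
      rcases eq_or_ne (c a * c' b) 0 with h0 | h0
      · rw [h0, zero_mul, abs_zero]
        positivity
      · have hab : a ≠ b := by
          rintro rfl
          rcases hdisj a with h | h <;> simp [h] at h0
        rw [abs_mul, abs_mul]
        exact mul_le_mul_of_nonneg_left (hMge a b hab) (by positivity)
    calc |∑ i, F.mulVec c i * F.mulVec c' i|
        ≤ ∑ a, ∑ b, |(c a * c' b) * (∑ r, F r a * F r b)| := by
          rw [hre]
          exact (Finset.abs_sum_le_sum_abs _ _).trans
            (Finset.sum_le_sum fun a _ => Finset.abs_sum_le_sum_abs _ _)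
      _ ≤ ∑ a, ∑ b, |c a| * |c' b| * M :=
          Finset.sum_le_sum fun a _ => Finset.sum_le_sum fun b _ => hterm a b
      _ = l1norm c * l1norm c' * M := by
          rw [l1norm, l1norm, Finset.sum_mul_sum, Finset.sum_mul]
          exact Finset.sum_congr rfl fun a _ => by rw [Finset.sum_mul]
      _ ≤ (Real.sqrt k * l2norm c) * (Real.sqrt k' * l2norm c') * M := by
          apply mul_le_mul_of_nonneg_right _ hM0
          have h2c : (0:ℝ) ≤ l2norm c := Real.sqrt_nonneg _
          have h2c' : (0:ℝ) ≤ l2norm c' := Real.sqrt_nonneg _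
          have l1c : (0:ℝ) ≤ l1norm c := Finset.sum_nonneg fun i _ => abs_nonneg _
          exact mul_le_mul (l1_le_sqrt_mul_l2 hc) (l1_le_sqrt_mul_l2 hc')
            (Finset.sum_nonneg fun i _ => abs_nonneg _)
            (mul_nonneg (Real.sqrt_nonneg _) h2c)
      _ = (Real.sqrt ((k : ℝ) * k') * M) * (l2norm c * l2norm c') := by
          rw [Real.sqrt_mul (by positivity)]
          ring
  -- lower bound: the set is bounded below by 0
  have hbdd : BddBelow {θ : ℝ | ∀ c c' : Fin p → ℝ, IsSparse k c → IsSparse k' c' →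
      (∀ i, c i = 0 ∨ c' i = 0) →
      |∑ i, F.mulVec c i * F.mulVec c' i| ≤ θ * (l2norm c * l2norm c')} := by
    refine ⟨0, fun θ hθ => ?_⟩
    set e : Fin p → Fin p → ℝ := fun j i => if i = j then 1 else 0 with he
    have hone : ∀ j : Fin p, l2norm (e j) = 1 := by
      intro j
      rw [l2norm]
      have : (∑ i, e j i ^ 2) = 1 := by
        simp [he, ite_pow, Finset.sum_ite_eq']
      rw [this, Real.sqrt_one]
    have hsp : IsSparse k (e i0) :=
      ⟨{i0}, by simpa using hk, fun i hi => by
        simp only [Finset.mem_singleton] at hi; simp [he, hi]⟩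
    have hsp' : IsSparse k' (e j0) :=
      ⟨{j0}, by simpa using hk', fun i hi => by
        simp only [Finset.mem_singleton] at hi; simp [he, hi]⟩
    have hd : ∀ i, e i0 i = 0 ∨ e j0 i = 0 := by
      intro i
      rcases eq_or_ne i i0 with rfl | h
      · exact Or.inr (by simp [he, hij])
      · exact Or.inl (by simp [he, h])
    have := hθ _ _ hsp hsp' hd
    rw [hone, hone] at this
    calc (0:ℝ) ≤ |∑ i, F.mulVec (e i0) i * F.mulVec (e j0) i| := abs_nonneg _
      _ ≤ θ * (1 * 1) := this
      _ = θ := by ring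
  exact csInf_le hbdd key
end

section
/- Let F be a real n×p matrix whose columns all have unit ℓ₂ norm, with coherence bound M. Let β ∈ ℝ^p be a k-sparse vector (k an even positive integer with 2.5k ≤ p) and y = Fβ + z with ‖z‖₂ ≤ ε. Set t = kM and suppose t < (2 + 2M)/(3 + √6) (equivalently k < (2 + 2M)/((3 + √6)M)). Then for any η ≥ ε, if β̂ is a minimizer of ‖γ‖₁ over all γ ∈ ℝ^p with ‖y − Fγ‖₂ ≤ η, then ‖β̂ − β‖₂ ≤ C(η + ε), where C = √2(2 + 3t − 2M) / (2 + 2M − (3 + √6)t). -/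
open Finset

namespace MipAux

lemma le_of_sq_le_sq {a b : ℝ} (hb : 0 ≤ b) (h : a ^ 2 ≤ b ^ 2) : a ≤ b := by
  nlinarith [sq_nonneg (a - b), sq_nonneg (a + b)]

lemma l2norm_nonneg {m : ℕ} (v : Fin m → ℝ) : 0 ≤ l2norm v := Real.sqrt_nonneg _

lemma sq_l2norm {m : ℕ} (v : Fin m → ℝ) : l2norm v ^ 2 = ∑ i, v i ^ 2 :=
  Real.sq_sqrt (by positivity)

lemma l2norm_le_of_sq_le {m : ℕ} {v : Fin m → ℝ} {a : ℝ} (ha : 0 ≤ a)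
    (h : ∑ i, v i ^ 2 ≤ a ^ 2) : l2norm v ≤ a := by
  rw [show l2norm v = Real.sqrt (∑ i, v i ^ 2) from rfl]
  calc Real.sqrt (∑ i, v i ^ 2) ≤ Real.sqrt (a ^ 2) := Real.sqrt_le_sqrt h
  _ = a := Real.sqrt_sq ha

lemma abs_sum_mul_le {m : ℕ} (f g : Fin m → ℝ) :
    |∑ i, f i * g i| ≤ l2norm f * l2norm g := by
  apply le_of_sq_le_sq (mul_nonneg (l2norm_nonneg f) (l2norm_nonneg g))
  rw [sq_abs, mul_pow, sq_l2norm, sq_l2norm]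
  exact Finset.sum_mul_sq_le_sq_mul_sq Finset.univ f g

lemma l2norm_sub_le {m : ℕ} (a b : Fin m → ℝ) :
    l2norm (fun i => a i - b i) ≤ l2norm a + l2norm b := by
  have hab := abs_sum_mul_le a b
  have h3 := l2norm_nonneg a
  have h4 := l2norm_nonneg b
  apply l2norm_le_of_sq_le (by linarith)
  have expand : ∑ i, (a i - b i) ^ 2
      = ((∑ i, a i ^ 2) + (∑ i, b i ^ 2)) - 2 * ∑ i, a i * b i := by
    rw [Finset.mul_sum, ← Finset.sum_add_distrib, ← Finset.sum_sub_distrib]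
    exact Finset.sum_congr rfl fun i _ => by ring
  rw [expand]
  have h1 : l2norm a ^ 2 = ∑ i, a i ^ 2 := sq_l2norm a
  have h2 : l2norm b ^ 2 = ∑ i, b i ^ 2 := sq_l2norm b
  have := (abs_le.mp hab).1
  nlinarith

variable {n p : ℕ}

lemma mulVec_inner (F : Matrix (Fin n) (Fin p) ℝ) (u v : Fin p → ℝ) :
    ∑ r, F.mulVec u r * F.mulVec v r
      = ∑ i, ∑ j, u i * v j * (∑ r, F r i * F r j) := by
  simp only [Matrix.mulVec, dotProduct]
  calc ∑ r, (∑ i, F r i * u i) * (∑ j, F r j * v j)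
      = ∑ r, ∑ i, ∑ j, (F r i * u i) * (F r j * v j) := by
        refine Finset.sum_congr rfl fun r _ => ?_
        rw [Finset.sum_mul_sum]
    _ = ∑ i, ∑ r, ∑ j, (F r i * u i) * (F r j * v j) := Finset.sum_comm
    _ = ∑ i, ∑ j, ∑ r, (F r i * u i) * (F r j * v j) := by
        exact Finset.sum_congr rfl fun i _ => Finset.sum_comm
    _ = ∑ i, ∑ j, u i * v j * ∑ r, F r i * F r j := by
        refine Finset.sum_congr rfl fun i _ => Finset.sum_congr rfl fun j _ => ?_
        rw [Finset.mul_sum]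
        exact Finset.sum_congr rfl fun r _ => by ring

lemma inner_error_bound (F : Matrix (Fin n) (Fin p) ℝ) {M : ℝ} (hM0 : 0 ≤ M)
    (hdiag : ∀ i : Fin p, ∑ r, F r i * F r i = 1)
    (hoff : ∀ i j : Fin p, i ≠ j → |∑ r, F r i * F r j| ≤ M) (u v : Fin p → ℝ) :
    |(∑ r, F.mulVec u r * F.mulVec v r) - ∑ i, u i * v i|
      ≤ M * ((∑ i, |u i|) * (∑ i, |v i|) - ∑ i, |u i| * |v i|) := by
  rw [mulVec_inner]
  have key : (∑ i, ∑ j, u i * v j * (∑ r, F r i * F r j)) - ∑ i, u i * v i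
      = ∑ i, ∑ j ∈ Finset.univ.erase i, u i * v j * (∑ r, F r i * F r j) := by
    rw [← Finset.sum_sub_distrib]
    refine Finset.sum_congr rfl fun i _ => ?_
    rw [← Finset.add_sum_erase _ _ (Finset.mem_univ i), hdiag i]
    ring
  rw [key]
  calc |∑ i, ∑ j ∈ Finset.univ.erase i, u i * v j * (∑ r, F r i * F r j)|
      ≤ ∑ i, |∑ j ∈ Finset.univ.erase i, u i * v j * (∑ r, F r i * F r j)| :=
        Finset.abs_sum_le_sum_abs _ _
    _ ≤ ∑ i, ∑ j ∈ Finset.univ.erase i, |u i| * |v j| * M := by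
        refine Finset.sum_le_sum fun i _ => ?_
        refine le_trans (Finset.abs_sum_le_sum_abs _ _) (Finset.sum_le_sum fun j hj => ?_)
        rw [abs_mul, abs_mul]
        exact mul_le_mul_of_nonneg_left (hoff i j (fun h => (Finset.mem_erase.mp hj).1 h.symm))
          (by positivity)
    _ = M * ((∑ i, |u i|) * (∑ i, |v i|) - ∑ i, |u i| * |v i|) := by
        have e1 : ∀ i : Fin p, ∑ j ∈ Finset.univ.erase i, |u i| * |v j| * M
            = M * (|u i| * ((∑ j, |v j|) - |v i|)) := by
          intro i
          rw [Finset.sum_erase_eq_sub (Finset.mem_univ i), ← Finset.sum_mul,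
            ← Finset.mul_sum]
          ring
        rw [Finset.sum_congr rfl fun i _ => e1 i, ← Finset.mul_sum]
        congr 1
        rw [Finset.sum_mul, ← Finset.sum_sub_distrib]
        exact Finset.sum_congr rfl fun i _ => by ring

lemma inner_disjoint_bound (F : Matrix (Fin n) (Fin p) ℝ) {M : ℝ} (hM0 : 0 ≤ M)
    (hdiag : ∀ i : Fin p, ∑ r, F r i * F r i = 1)
    (hoff : ∀ i j : Fin p, i ≠ j → |∑ r, F r i * F r j| ≤ M) (u v : Fin p → ℝ)
    (hdisj : ∀ i, u i = 0 ∨ v i = 0) :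
    |∑ r, F.mulVec u r * F.mulVec v r| ≤ M * ((∑ i, |u i|) * (∑ i, |v i|)) := by
  have h := inner_error_bound F hM0 hdiag hoff u v
  have h0 : ∑ i, u i * v i = 0 :=
    Finset.sum_eq_zero fun i _ => by rcases hdisj i with h | h <;> simp [h]
  have h0' : ∑ i, |u i| * |v i| = 0 :=
    Finset.sum_eq_zero fun i _ => by rcases hdisj i with h | h <;> simp [h]
  rw [h0, h0', sub_zero, sub_zero] at h
  exact h

lemma self_lower_bound (F : Matrix (Fin n) (Fin p) ℝ) {M : ℝ} (hM0 : 0 ≤ M)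
    (hdiag : ∀ i : Fin p, ∑ r, F r i * F r i = 1)
    (hoff : ∀ i j : Fin p, i ≠ j → |∑ r, F r i * F r j| ≤ M) (w : Fin p → ℝ) :
    (∑ i, w i ^ 2) - M * ((∑ i, |w i|) ^ 2 - ∑ i, w i ^ 2)
      ≤ ∑ r, F.mulVec w r * F.mulVec w r := by
  have h := inner_error_bound F hM0 hdiag hoff w w
  have e1 : ∑ i, w i * w i = ∑ i, w i ^ 2 :=
    Finset.sum_congr rfl fun i _ => (sq (w i)).symm
  have e2 : ∑ i, |w i| * |w i| = ∑ i, w i ^ 2 :=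
    Finset.sum_congr rfl fun i _ => by rw [abs_mul_abs_self, ← sq]
  rw [e1, e2] at h
  have h' := (abs_le.mp h).1
  nlinarith [h']

lemma exists_top_subset {α : Type*} [DecidableEq α] (f : α → ℝ) :
    ∀ (m : ℕ) (s : Finset α), m ≤ s.card →
      ∃ u, u ⊆ s ∧ u.card = m ∧ ∀ i ∈ s, i ∉ u → ∀ j ∈ u, f i ≤ f j := by
  intro m
  induction m with
  | zero => exact fun s _ => ⟨∅, Finset.empty_subset _, Finset.card_empty, by simp⟩
  | succ k ih =>
    intro s hs
    have hne : s.Nonempty := Finset.card_pos.mp (by omega)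
    obtain ⟨j₀, hj₀s, hj₀max⟩ := s.exists_max_image f hne
    obtain ⟨u', hu's, hu'c, hu'p⟩ := ih (s.erase j₀)
      (by rw [Finset.card_erase_of_mem hj₀s]; omega)
    refine ⟨insert j₀ u', ?_, ?_, ?_⟩
    · exact Finset.insert_subset hj₀s (hu's.trans (Finset.erase_subset _ _))
    · rw [Finset.card_insert_of_notMem fun h => (Finset.mem_erase.mp (hu's h)).1 rfl, hu'c]
    · intro i his hiu j hj
      rcases Finset.mem_insert.mp hj with rfl | hj'
      · exact hj₀max i his
      · have hie : i ∈ s.erase j₀ := Finset.mem_erase.mpr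
          ⟨fun h => hiu (h ▸ Finset.mem_insert_self _ _), his⟩
        exact hu'p i hie (fun h => hiu (Finset.mem_insert_of_mem h)) j hj'

/-- Masking of a vector by a finset. -/
def mask {p : ℕ} (s : Finset (Fin p)) (v : Fin p → ℝ) : Fin p → ℝ :=
  fun i => if i ∈ s then v i else 0

lemma sum_mask_abs {p : ℕ} (s : Finset (Fin p)) (v : Fin p → ℝ) :
    ∑ i, |mask s v i| = ∑ i ∈ s, |v i| := by
  have e : ∀ i, |mask s v i| = if i ∈ s then |v i| else 0 := fun i => by
    unfold mask; split <;> simp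
  simp_rw [e]
  rw [Finset.sum_ite_mem, Finset.univ_inter]

lemma sum_mask_sq {p : ℕ} (s : Finset (Fin p)) (v : Fin p → ℝ) :
    ∑ i, mask s v i ^ 2 = ∑ i ∈ s, v i ^ 2 := by
  have e : ∀ i, mask s v i ^ 2 = if i ∈ s then v i ^ 2 else 0 := fun i => by
    unfold mask; split <;> simp
  simp_rw [e]
  rw [Finset.sum_ite_mem, Finset.univ_inter]

lemma arith (M t b c2 X2 A s2 s6 : ℝ) (h2Mt : 2 * M ≤ t) (hb : 0 ≤ b)
    (hX2 : 0 ≤ X2) (hA : 0 ≤ A) (ht0 : 0 ≤ t)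
    (h6 : s6 ^ 2 = 6) (hs2 : s2 ^ 2 = 2) (hs6nn : 0 ≤ s6) (hs2nn : 0 ≤ s2)
    (hD : (3 + s6) * t < 2 + 2 * M)
    (h1 : A ^ 2 ≤ A * b + s6 / 2 * t * X2)
    (h2 : (1 + M - 3 / 2 * t) * X2 ≤ A ^ 2)
    (h3 : c2 ≤ s2 / 2 * X2) :
    X2 + c2 ≤ (s2 * (2 + 3 * t - 2 * M) / (2 + 2 * M - (3 + s6) * t)) ^ 2 * b ^ 2 := by
  have hs6ub : s6 ≤ 5 / 2 := by nlinarith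
  have hs2ub : s2 ≤ 3 / 2 := by nlinarith
  obtain ⟨D, hDdef⟩ : ∃ D : ℝ, D = 2 + 2 * M - (3 + s6) * t := ⟨_, rfl⟩
  obtain ⟨N1, hN1def⟩ : ∃ N1 : ℝ, N1 = 2 + 2 * M - 3 * t := ⟨_, rfl⟩
  obtain ⟨N2, hN2def⟩ : ∃ N2 : ℝ, N2 = 2 + 3 * t - 2 * M := ⟨_, rfl⟩
  rw [← hDdef, ← hN2def]
  have hD0 : 0 < D := by rw [hDdef]; linarith
  have hN1 : N1 = D + s6 * t := by rw [hN1def, hDdef]; ring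
  have hN10 : 0 < N1 := by rw [hN1]; linarith [mul_nonneg hs6nn ht0]
  have hN2 : 2 ≤ N2 := by rw [hN2def]; linarith
  -- step b : D * X2 ≤ 2 * (A * b)
  have hb1 : D * X2 ≤ 2 * (A * b) := by rw [hDdef]; linarith [h1, h2]
  -- step c : A * D ≤ b * N1
  have hc : A * D ≤ b * N1 := by
    rcases eq_or_lt_of_le hA with hA0 | hA0
    · rw [← hA0, zero_mul]
      exact mul_nonneg hb hN10.le
    · have hts : 0 ≤ s6 / 2 * t := by positivity
      have e0 : s6 / 2 * t * (D * X2) ≤ s6 / 2 * t * (2 * (A * b)) :=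
        mul_le_mul_of_nonneg_left hb1 hts
      have hA2 : A ^ 2 * D ≤ A * b * (D + s6 * t) := by
        linarith [mul_le_mul_of_nonneg_right h1 hD0.le, e0]
      rw [hN1]
      nlinarith [hA2, hA0]
  -- step d : X2 * D^2 ≤ 2 * b^2 * N1
  have hd : X2 * D ^ 2 ≤ 2 * b ^ 2 * N1 := by
    have e1 : D * (D * X2) ≤ D * (2 * (A * b)) := mul_le_mul_of_nonneg_left hb1 hD0.le
    have e2 : (2 * b) * (A * D) ≤ (2 * b) * (b * N1) :=
      mul_le_mul_of_nonneg_left hc (by linarith)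
    linarith [e1, e2]
  -- step e : c2 * D^2 ≤ s2 * b^2 * N1
  have he : c2 * D ^ 2 ≤ s2 * b ^ 2 * N1 := by
    have e3 : c2 * D ^ 2 ≤ (s2 / 2 * X2) * D ^ 2 :=
      mul_le_mul_of_nonneg_right h3 (sq_nonneg D)
    have e4 : s2 / 2 * (X2 * D ^ 2) ≤ s2 / 2 * (2 * b ^ 2 * N1) :=
      mul_le_mul_of_nonneg_left hd (by positivity)
    linarith [e3, e4]
  -- step f
  have hf : (2 + s2) * N1 ≤ 2 * N2 ^ 2 := by
    have e5 : (2 + s2) * N1 ≤ (7 / 2) * 2 :=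
      mul_le_mul (by linarith) (by rw [hN1def]; linarith) hN10.le (by norm_num)
    linarith [e5, hN2, sq_nonneg (N2 - 2)]
  -- assemble
  have hfinal : (X2 + c2) * D ^ 2 ≤ 2 * N2 ^ 2 * b ^ 2 := by
    have e6 : (2 + s2) * N1 * b ^ 2 ≤ 2 * N2 ^ 2 * b ^ 2 :=
      mul_le_mul_of_nonneg_right hf (sq_nonneg b)
    linarith [hd, he, e6]
  have hgoal : (s2 * N2 / D) ^ 2 * b ^ 2 = 2 * N2 ^ 2 * b ^ 2 / D ^ 2 := by
    rw [div_pow, mul_pow, hs2]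
    ring
  rw [hgoal, le_div_iff₀ (by positivity : (0:ℝ) < D ^ 2)]
  exact hfinal


lemma sum_abs_sq_le {p : ℕ} (s : Finset (Fin p)) (v : Fin p → ℝ) :
    (∑ i ∈ s, |v i|) ^ 2 ≤ (s.card : ℝ) * ∑ i ∈ s, v i ^ 2 := by
  have hcs := sq_sum_le_card_mul_sum_sq (s := s) (f := fun i => |v i|)
  simpa [sq_abs] using hcs

lemma crossArith (M t X2 LS LSc mR s6 : ℝ) (hM0 : 0 ≤ M) (hm : 1 ≤ mR) (ht : t = 2 * mR * M)
    (h6 : s6 ^ 2 = 6) (hs6 : 0 ≤ s6) (hX2 : 0 ≤ X2) (hLS : 0 ≤ LS) (hLSc : 0 ≤ LSc)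
    (q3 : LS ^ 2 ≤ 3 * mR * X2) (q2 : LSc ^ 2 ≤ 2 * mR * X2) :
    M * (LS * LSc) ≤ s6 / 2 * t * X2 := by
  have ht0 : 0 ≤ t := by rw [ht]; nlinarith
  apply le_of_sq_le_sq (mul_nonneg (mul_nonneg (by positivity) ht0) hX2)
  have e1 : LS ^ 2 * LSc ^ 2 ≤ (3 * mR * X2) * (2 * mR * X2) :=
    mul_le_mul q3 q2 (sq_nonneg _) (by nlinarith)
  have e2 := mul_le_mul_of_nonneg_left e1 (sq_nonneg M)
  calc (M * (LS * LSc)) ^ 2 = M ^ 2 * (LS ^ 2 * LSc ^ 2) := by ring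
    _ ≤ M ^ 2 * ((3 * mR * X2) * (2 * mR * X2)) := e2
    _ = (s6 / 2 * t * X2) ^ 2 := by
        rw [ht]; linear_combination (-(mR ^ 2 * M ^ 2 * X2 ^ 2)) * h6

lemma lowArith (M t X2 LS A2 mR : ℝ) (hM0 : 0 ≤ M) (ht : t = 2 * mR * M)
    (hlow : X2 - M * (LS ^ 2 - X2) ≤ A2) (q3 : LS ^ 2 ≤ 3 * mR * X2) :
    (1 + M - 3 / 2 * t) * X2 ≤ A2 := by
  rw [ht]
  linarith [mul_le_mul_of_nonneg_left q3 hM0]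

lemma tailArith (c2 U V LSc LT1 mR s2 : ℝ) (hm : 1 ≤ mR) (hs2 : s2 ^ 2 = 2) (hs2n : 0 ≤ s2)
    (hU : 0 ≤ U) (hV : 0 ≤ V) (hc2 : 0 ≤ c2) (hLSc : 0 ≤ LSc) (hLT1 : 0 ≤ LT1)
    (h1 : mR * c2 ≤ LT1 * LSc) (h2 : LT1 ^ 2 ≤ mR * V) (h3 : LSc ^ 2 ≤ 2 * mR * U) :
    c2 ≤ s2 / 2 * (U + V) := by
  have hm0 : 0 < mR := by linarith
  have e1 : (mR * c2) ^ 2 ≤ (LT1 * LSc) ^ 2 :=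
    pow_le_pow_left₀ (mul_nonneg hm0.le hc2) h1 2
  have e2 : LT1 ^ 2 * LSc ^ 2 ≤ (mR * V) * (2 * mR * U) :=
    mul_le_mul h2 h3 (sq_nonneg _) (mul_nonneg hm0.le hV)
  have e3 : c2 ^ 2 ≤ 2 * U * V := by nlinarith [sq_nonneg mR, mul_pos hm0 hm0]
  apply le_of_sq_le_sq (by positivity)
  have e4 : (s2 / 2 * (U + V)) ^ 2 = 1 / 2 * (U + V) ^ 2 := by
    rw [mul_pow, div_pow, hs2]; ring
  rw [e4]
  nlinarith [sq_nonneg (U - V)]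

end MipAux

set_option maxHeartbeats 1600000 in
/-- Recovery under the mutual incoherence property. With `k = 2*m` even,
`M` the coherence bound of `F`, `t = kM < (2 + 2M)/(3 + √6)`, `β` `k`-sparse,
`y = Fβ + z`, `‖z‖₂ ≤ ε ≤ η`, if `β̂` minimizes the ℓ₁ norm subject to `‖y - Fγ‖₂ ≤ η`,
then `‖β̂ - β‖₂ ≤ C(η + ε)` with `C = √2(2 + 3t - 2M)/(2 + 2M - (3 + √6)t)`. -/
theorem mip_recovery_error {n p m : ℕ} (F : Matrix (Fin n) (Fin p) ℝ)
    (hcols : ∀ j, l2norm (fun i => F i j) = 1)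
    (hm : 1 ≤ m) (hp : 5 * m ≤ p)
    (M t : ℝ) (hM : M = coherence F) (ht : t = (2 * m : ℝ) * M)
    (htlt : t < (2 + 2 * M) / (3 + Real.sqrt 6))
    (β : Fin p → ℝ) (hβ : IsSparse (2 * m) β)
    (z : Fin n → ℝ) (y : Fin n → ℝ) (hy : y = fun i => F.mulVec β i + z i)
    (ε η : ℝ) (hz : l2norm z ≤ ε) (hη : ε ≤ η)
    (βhat : Fin p → ℝ)
    (hfeas : l2norm (fun i => y i - F.mulVec βhat i) ≤ η)
    (hmin : ∀ γ : Fin p → ℝ, l2norm (fun i => y i - F.mulVec γ i) ≤ η →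
      l1norm βhat ≤ l1norm γ) :
    l2norm (fun i => βhat i - β i) ≤
      (Real.sqrt 2 * (2 + 3 * t - 2 * M) / (2 + 2 * M - (3 + Real.sqrt 6) * t)) * (η + ε) := by
  classical
  obtain ⟨s0, hs0c, hs0z⟩ := hβ
  -- the index set T₀ ⊇ supp β of size 2m
  have hcardu : (Finset.univ : Finset (Fin p)).card = p := by simp
  obtain ⟨T₀, hsT₀, -, hT₀c⟩ :=
    Finset.exists_subsuperset_card_eq (Finset.subset_univ s0) hs0c (by rw [hcardu]; omega)
  have hβ0 : ∀ i ∉ T₀, β i = 0 := fun i hi => hs0z i fun hmem => hi (hsT₀ hmem)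
  obtain ⟨h, hhdef⟩ : ∃ h : Fin p → ℝ, h = fun i => βhat i - β i := ⟨_, rfl⟩
  rw [← hhdef]
  -- coherence facts
  have hdiag : ∀ i : Fin p, ∑ r, F r i * F r i = 1 := by
    intro i
    have h2 : ∑ r, F r i ^ 2 = 1 := by
      have := congrArg (fun x : ℝ => x ^ 2) (hcols i)
      simpa [MipAux.sq_l2norm] using this
    calc ∑ r, F r i * F r i = ∑ r, F r i ^ 2 :=
          Finset.sum_congr rfl fun r _ => (sq (F r i)).symm
      _ = 1 := h2
  have hbdd : BddAbove {x : ℝ | ∃ i j : Fin p, i ≠ j ∧ x = |∑ r, F r i * F r j|} := by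
    refine ⟨1, fun x hx => ?_⟩
    obtain ⟨i, j, hij, rfl⟩ := hx
    have hcs := MipAux.abs_sum_mul_le (fun r => F r i) (fun r => F r j)
    rw [hcols i, hcols j] at hcs
    simpa using hcs
  have hMle : ∀ i j : Fin p, i ≠ j → |∑ r, F r i * F r j| ≤ M := by
    intro i j hij
    rw [hM]
    exact le_csSup hbdd ⟨i, j, hij, rfl⟩
  have hM0 : 0 ≤ M := by
    have h01 : (⟨0, by omega⟩ : Fin p) ≠ (⟨1, by omega⟩ : Fin p) := by
      simp [Fin.ext_iff]
    exact le_trans (abs_nonneg _) (hMle _ _ h01)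
  have hm1 : (1 : ℝ) ≤ (m : ℝ) := by exact_mod_cast hm
  have htm : t = 2 * (m : ℝ) * M := by rw [ht]
  have h2Mt : 2 * M ≤ t := by rw [htm]; nlinarith
  have ht0 : 0 ≤ t := by linarith
  have hs6nn : (0 : ℝ) ≤ Real.sqrt 6 := Real.sqrt_nonneg 6
  have hs2nn : (0 : ℝ) ≤ Real.sqrt 2 := Real.sqrt_nonneg 2
  have h6 : Real.sqrt 6 ^ 2 = 6 := Real.sq_sqrt (by norm_num)
  have hs2sq : Real.sqrt 2 ^ 2 = 2 := Real.sq_sqrt (by norm_num)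
  have hD : (3 + Real.sqrt 6) * t < 2 + 2 * M := by
    have hpos : (0 : ℝ) < 3 + Real.sqrt 6 := by positivity
    have := (lt_div_iff₀ hpos).mp htlt
    linarith
  -- the index set T₁: the m largest entries of h outside T₀
  obtain ⟨T₁, hT₁sub, hT₁card, hT₁max⟩ :=
    MipAux.exists_top_subset (fun i => |h i|) m T₀ᶜ
      (by rw [Finset.card_compl, hT₀c, Fintype.card_fin]; omega)
  have hdisjT : Disjoint T₀ T₁ := Finset.disjoint_left.mpr fun {i} hi0 hi1 =>
    Finset.mem_compl.mp (hT₁sub hi1) hi0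
  obtain ⟨S, hSdef⟩ : ∃ S : Finset (Fin p), S = T₀ ∪ T₁ := ⟨_, rfl⟩
  have hScard : S.card = 3 * m := by
    rw [hSdef, Finset.card_union_of_disjoint hdisjT, hT₀c, hT₁card]; omega
  -- nonnegativity of the various sums
  have hX2nn : 0 ≤ ∑ i ∈ S, h i ^ 2 := Finset.sum_nonneg fun i _ => sq_nonneg _
  have hUnn : 0 ≤ ∑ i ∈ T₀, h i ^ 2 := Finset.sum_nonneg fun i _ => sq_nonneg _
  have hVnn : 0 ≤ ∑ i ∈ T₁, h i ^ 2 := Finset.sum_nonneg fun i _ => sq_nonneg _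
  have hc2nn : 0 ≤ ∑ i ∈ Sᶜ, h i ^ 2 := Finset.sum_nonneg fun i _ => sq_nonneg _
  have hLSnn : 0 ≤ ∑ i ∈ S, |h i| := Finset.sum_nonneg fun i _ => abs_nonneg _
  have hLScnn : 0 ≤ ∑ i ∈ Sᶜ, |h i| := Finset.sum_nonneg fun i _ => abs_nonneg _
  have hLT1nn : 0 ≤ ∑ i ∈ T₁, |h i| := Finset.sum_nonneg fun i _ => abs_nonneg _
  -- ℓ₂-ℓ₁ comparisons
  have hX2UV : ∑ i ∈ S, h i ^ 2 = (∑ i ∈ T₀, h i ^ 2) + ∑ i ∈ T₁, h i ^ 2 := by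
    rw [hSdef, Finset.sum_union hdisjT]
  have hLS2 : (∑ i ∈ S, |h i|) ^ 2 ≤ 3 * (m : ℝ) * ∑ i ∈ S, h i ^ 2 := by
    have hcs := MipAux.sum_abs_sq_le S h
    rw [hScard] at hcs
    push_cast at hcs
    linarith
  have hL02 : (∑ i ∈ T₀, |h i|) ^ 2 ≤ 2 * (m : ℝ) * ∑ i ∈ T₀, h i ^ 2 := by
    have hcs := MipAux.sum_abs_sq_le T₀ h
    rw [hT₀c] at hcs
    push_cast at hcs
    linarith
  have hLT12 : (∑ i ∈ T₁, |h i|) ^ 2 ≤ (m : ℝ) * ∑ i ∈ T₁, h i ^ 2 := by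
    have hcs := MipAux.sum_abs_sq_le T₁ h
    rw [hT₁card] at hcs
    linarith
  -- feasibility of β and the cone constraint
  have hyz : (fun i => y i - F.mulVec β i) = z := by funext i; simp [hy]
  have hfeasβ : l2norm (fun i => y i - F.mulVec β i) ≤ η := by
    rw [hyz]; exact le_trans hz hη
  have hl1 := hmin β hfeasβ
  have hsplit1 : l1norm βhat = (∑ i ∈ T₀, |βhat i|) + ∑ i ∈ T₀ᶜ, |h i| := by
    rw [l1norm, ← Finset.sum_add_sum_compl T₀ (fun i => |βhat i|)]
    congr 1
    refine Finset.sum_congr rfl fun i hi => ?_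
    rw [hhdef]
    simp [hβ0 i (Finset.mem_compl.mp hi)]
  have hsplit2 : l1norm β = ∑ i ∈ T₀, |β i| := by
    rw [l1norm, ← Finset.sum_add_sum_compl T₀ (fun i => |β i|)]
    have hz0 : ∑ i ∈ T₀ᶜ, |β i| = 0 :=
      Finset.sum_eq_zero fun i hi => by rw [hβ0 i (Finset.mem_compl.mp hi), abs_zero]
    rw [hz0, add_zero]
  have htri : (∑ i ∈ T₀, |β i|) - ∑ i ∈ T₀, |βhat i| ≤ ∑ i ∈ T₀, |h i| := by
    rw [← Finset.sum_sub_distrib]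
    refine Finset.sum_le_sum fun i _ => ?_
    calc |β i| - |βhat i| ≤ |β i - βhat i| := abs_sub_abs_le_abs_sub _ _
      _ = |h i| := by rw [abs_sub_comm, hhdef]
  have hcone : ∑ i ∈ T₀ᶜ, |h i| ≤ ∑ i ∈ T₀, |h i| := by
    rw [hsplit1, hsplit2] at hl1
    linarith
  have hLSc_le : ∑ i ∈ Sᶜ, |h i| ≤ ∑ i ∈ T₀, |h i| := by
    have hsub2 : Sᶜ ⊆ T₀ᶜ := by
      rw [hSdef]; exact Finset.compl_subset_compl.mpr Finset.subset_union_left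
    have := Finset.sum_le_sum_of_subset_of_nonneg hsub2 fun i _ _ => abs_nonneg (h i)
    linarith
  have hLSc2 : (∑ i ∈ Sᶜ, |h i|) ^ 2 ≤ 2 * (m : ℝ) * ∑ i ∈ T₀, h i ^ 2 := by
    have := pow_le_pow_left₀ hLScnn hLSc_le 2
    linarith
  have hLSc2X : (∑ i ∈ Sᶜ, |h i|) ^ 2 ≤ 2 * (m : ℝ) * ∑ i ∈ S, h i ^ 2 := by
    have hUX : (∑ i ∈ T₀, h i ^ 2) ≤ ∑ i ∈ S, h i ^ 2 := by rw [hX2UV]; linarith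
    nlinarith [hLSc2, hUX, hm1]
  -- the ℓ₂ bound on F h
  have hFh : l2norm (F.mulVec h) ≤ η + ε := by
    have hsub : F.mulVec h = fun r => (y r - F.mulVec β r) - (y r - F.mulVec βhat r) := by
      funext r
      have e : F.mulVec h r = F.mulVec βhat r - F.mulVec β r := by
        rw [hhdef, show (fun i => βhat i - β i) = βhat - β from rfl, Matrix.mulVec_sub]
        rfl
      rw [e]; ring
    rw [hsub]
    calc l2norm (fun r => (y r - F.mulVec β r) - (y r - F.mulVec βhat r))
        ≤ l2norm (fun r => y r - F.mulVec β r) + l2norm (fun r => y r - F.mulVec βhat r) :=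
          MipAux.l2norm_sub_le _ _
      _ ≤ η + ε := by
          have h1 := le_trans hfeasβ (le_refl η)
          have h2 : l2norm (fun i => y i - F.mulVec β i) ≤ ε := by rw [hyz]; exact hz
          linarith [hfeas]
  -- splitting h into its S part and its Sᶜ part
  have hmaskadd : h = MipAux.mask S h + MipAux.mask Sᶜ h := by
    funext i
    show h i = MipAux.mask S h i + MipAux.mask Sᶜ h i
    unfold MipAux.mask
    by_cases hi : i ∈ S <;> simp [hi]
  have hmvsplit : ∀ r, F.mulVec h r
      = F.mulVec (MipAux.mask S h) r + F.mulVec (MipAux.mask Sᶜ h) r := by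
    intro r
    calc F.mulVec h r = F.mulVec (MipAux.mask S h + MipAux.mask Sᶜ h) r :=
          congrArg (fun v => F.mulVec v r) hmaskadd
      _ = _ := by rw [Matrix.mulVec_add]; rfl
  -- mask sum identities
  have hmabsS : ∑ i, |MipAux.mask S h i| = ∑ i ∈ S, |h i| := MipAux.sum_mask_abs S h
  have hmabsSc : ∑ i, |MipAux.mask Sᶜ h i| = ∑ i ∈ Sᶜ, |h i| := MipAux.sum_mask_abs Sᶜ h
  have hmsqS : ∑ i, MipAux.mask S h i ^ 2 = ∑ i ∈ S, h i ^ 2 := MipAux.sum_mask_sq S h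
  -- lower bound on A²
  have hA2eq : l2norm (F.mulVec (MipAux.mask S h)) ^ 2
      = ∑ r, F.mulVec (MipAux.mask S h) r * F.mulVec (MipAux.mask S h) r := by
    rw [MipAux.sq_l2norm]
    exact Finset.sum_congr rfl fun r _ => sq _
  have hlow := MipAux.self_lower_bound F hM0 hdiag hMle (MipAux.mask S h)
  rw [hmsqS, hmabsS, ← hA2eq] at hlow
  have hlowfin : (1 + M - 3 / 2 * t) * (∑ i ∈ S, h i ^ 2)
      ≤ l2norm (F.mulVec (MipAux.mask S h)) ^ 2 :=
    MipAux.lowArith M t _ _ _ (m : ℝ) hM0 htm hlow hLS2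
  -- upper bound on A²
  have hinner_split : ∑ r, F.mulVec (MipAux.mask S h) r * F.mulVec h r
      = l2norm (F.mulVec (MipAux.mask S h)) ^ 2
        + ∑ r, F.mulVec (MipAux.mask S h) r * F.mulVec (MipAux.mask Sᶜ h) r := by
    rw [hA2eq, ← Finset.sum_add_distrib]
    refine Finset.sum_congr rfl fun r _ => ?_
    rw [hmvsplit r]; ring
  have hCS : ∑ r, F.mulVec (MipAux.mask S h) r * F.mulVec h r
      ≤ l2norm (F.mulVec (MipAux.mask S h)) * (η + ε) := by
    refine le_trans (le_abs_self _) (le_trans (MipAux.abs_sum_mul_le _ _) ?_)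
    exact mul_le_mul_of_nonneg_left hFh (MipAux.l2norm_nonneg _)
  have hcross := MipAux.inner_disjoint_bound F hM0 hdiag hMle
      (MipAux.mask S h) (MipAux.mask Sᶜ h)
      (fun i => by unfold MipAux.mask; by_cases hi : i ∈ S <;> simp [hi])
  rw [hmabsS, hmabsSc] at hcross
  have hMbound : M * ((∑ i ∈ S, |h i|) * (∑ i ∈ Sᶜ, |h i|))
      ≤ Real.sqrt 6 / 2 * t * (∑ i ∈ S, h i ^ 2) :=
    MipAux.crossArith M t _ _ _ (m : ℝ) (Real.sqrt 6) hM0 hm1 htm h6 hs6nn hX2nn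
      hLSnn hLScnn hLS2 hLSc2X
  have hup : l2norm (F.mulVec (MipAux.mask S h)) ^ 2
      ≤ l2norm (F.mulVec (MipAux.mask S h)) * (η + ε)
        + Real.sqrt 6 / 2 * t * (∑ i ∈ S, h i ^ 2) := by
    have hnegabs := neg_abs_le (∑ r, F.mulVec (MipAux.mask S h) r * F.mulVec (MipAux.mask Sᶜ h) r)
    linarith [hinner_split, hCS, hcross, hMbound]
  -- the tail bound
  have hstep : ∀ i ∈ Sᶜ, (m : ℝ) * h i ^ 2 ≤ (∑ j ∈ T₁, |h j|) * |h i| := by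
    intro i hi
    have hiS : i ∉ T₀ ∪ T₁ := hSdef ▸ Finset.mem_compl.mp hi
    have hiT0c : i ∈ T₀ᶜ := Finset.mem_compl.mpr fun hin => hiS (Finset.mem_union_left _ hin)
    have hiT1 : i ∉ T₁ := fun hin => hiS (Finset.mem_union_right _ hin)
    have hmax : ∀ j ∈ T₁, |h i| ≤ |h j| := hT₁max i hiT0c hiT1
    have hm2 : (m : ℝ) * |h i| ≤ ∑ j ∈ T₁, |h j| := by
      have hsumle : ∑ _j ∈ T₁, |h i| ≤ ∑ j ∈ T₁, |h j| := Finset.sum_le_sum hmax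
      rw [Finset.sum_const, hT₁card, nsmul_eq_mul] at hsumle
      exact hsumle
    have hmm := mul_le_mul_of_nonneg_right hm2 (abs_nonneg (h i))
    calc (m : ℝ) * h i ^ 2 = (m : ℝ) * |h i| * |h i| := by rw [← sq_abs]; ring
      _ ≤ _ := hmm
  have hmc2 : (m : ℝ) * (∑ i ∈ Sᶜ, h i ^ 2) ≤ (∑ j ∈ T₁, |h j|) * (∑ i ∈ Sᶜ, |h i|) := by
    rw [Finset.mul_sum, Finset.mul_sum]
    exact Finset.sum_le_sum hstep
  have htail : (∑ i ∈ Sᶜ, h i ^ 2) ≤ Real.sqrt 2 / 2 * (∑ i ∈ S, h i ^ 2) := by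
    have := MipAux.tailArith (∑ i ∈ Sᶜ, h i ^ 2) (∑ i ∈ T₀, h i ^ 2) (∑ i ∈ T₁, h i ^ 2)
      (∑ i ∈ Sᶜ, |h i|) (∑ i ∈ T₁, |h i|) (m : ℝ) (Real.sqrt 2) hm1 hs2sq hs2nn
      hUnn hVnn hc2nn hLScnn hLT1nn hmc2 hLT12 hLSc2
    rw [hX2UV]
    exact this
  -- conclusion
  have hb0 : 0 ≤ η + ε := by linarith [MipAux.l2norm_nonneg z, hz, hη]
  have hA0 : 0 ≤ l2norm (F.mulVec (MipAux.mask S h)) := MipAux.l2norm_nonneg _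
  have harith := MipAux.arith M t (η + ε) (∑ i ∈ Sᶜ, h i ^ 2) (∑ i ∈ S, h i ^ 2)
      (l2norm (F.mulVec (MipAux.mask S h))) (Real.sqrt 2) (Real.sqrt 6)
      h2Mt hb0 hX2nn hA0 ht0 h6 hs2sq hs6nn hs2nn hD hup hlowfin htail
  have hC0 : 0 ≤ Real.sqrt 2 * (2 + 3 * t - 2 * M) / (2 + 2 * M - (3 + Real.sqrt 6) * t) :=
    div_nonneg (mul_nonneg hs2nn (by linarith)) (by linarith)
  apply MipAux.l2norm_le_of_sq_le (mul_nonneg hC0 hb0)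
  rw [mul_pow]
  calc ∑ i, h i ^ 2 = (∑ i ∈ S, h i ^ 2) + ∑ i ∈ Sᶜ, h i ^ 2 :=
        (Finset.sum_add_sum_compl S _).symm
    _ ≤ _ := harith
end
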